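/- arXiv:1908.10822 — 7 statements merged into one kernel-verified Lean document; each statement's English description precedes it below -/
import Mathlib

section
/- For every square-summable sequence (α_n)_{n≥0} of complex numbers, the sequence (α̂_n)_{n≥0} defined by α̂_n = Σ_{k=0}^{min(n,J)} β_k a_{n-k}^k α_{n-k} is square-summable, and for every z in the open unit disk, Σ_{n≥0} α_n f_n(z) = Σ_{n≥0} α̂_n z^n. In particular, every function in H(K) belongs to the Hardy space H²(𝔻), i.e., is an analytic function on 𝔻 whose Taylor coefficients are square-summable. -/
open Filter Finset

/-- Auxiliary: the shifted sequences making up `αhat`. -/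
private def gAux (β a α : ℕ → ℂ) (k n : ℕ) : ℂ :=
  if k ≤ n then β k * (a (n - k)) ^ k * α (n - k) else 0

private lemma gAux_add (β a α : ℕ → ℂ) (k n : ℕ) :
    gAux β a α k (n + k) = β k * (a n) ^ k * α n := by
  simp [gAux, Nat.le_add_left, Nat.add_sub_cancel]

private lemma gAux_of_lt (β a α : ℕ → ℂ) {k n : ℕ} (h : n < k) :
    gAux β a α k n = 0 := by
  simp [gAux, Nat.not_le.mpr h]

/-- For every square-summable sequence `α`, the sequence
`α̂ n = ∑_{k=0}^{min n J} β k * a (n-k) ^ k * α (n-k)` is square-summable, and for every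
`z` in the open unit disk, `∑' n, α n * f n z = ∑' n, α̂ n * z ^ n`.  In particular every
function in `H(K)` lies in the Hardy space `H²(𝔻)`. -/
theorem statement0
    (J : ℕ) (hJ : 1 ≤ J)
    (z : Fin J → ℂ) (hz : ∀ j, ‖z j‖ = 1) (hzinj : Function.Injective z)
    (φ : ℂ → ℂ) (hφ : ∀ x, φ x = ∏ j, (1 - (starRingEnd ℂ) (z j) * x))
    (β : ℕ → ℂ) (hβ : ∀ x, φ x = ∑ k ∈ Finset.range (J + 1), β k * x ^ k)
    (hβ0 : β 0 = 1) (hβJ : ∀ k, J < k → β k = 0)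
    (a : ℕ → ℂ) (ha : ∀ n, a n ≠ 1) (halim : Filter.Tendsto a Filter.atTop (nhds 1))
    (f : ℕ → ℂ → ℂ) (hf : ∀ n x, f n x = x ^ n * φ (a n * x))
    (α : ℕ → ℂ) (hα : Summable fun n => ‖α n‖ ^ 2)
    (αhat : ℕ → ℂ)
    (hαhat : ∀ n, αhat n =
      ∑ k ∈ Finset.range (min n J + 1), β k * (a (n - k)) ^ k * α (n - k)) :
    (Summable fun n => ‖αhat n‖ ^ 2) ∧
      ∀ x : ℂ, ‖x‖ < 1 →
        (Summable fun n => α n * f n x) ∧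
        ∑' n, α n * f n x = ∑' n, αhat n * x ^ n := by
  -- a bound on `‖a n‖`
  obtain ⟨M, hM⟩ : ∃ M, ∀ n, ‖a n‖ ≤ M := by
    obtain ⟨M, hM⟩ := (halim.norm.isBoundedUnder_le).bddAbove_range
    exact ⟨M, fun n => hM (Set.mem_range_self n)⟩
  have hM0 : 0 ≤ M := le_trans (norm_nonneg _) (hM 0)
  -- a bound on `‖α n‖`
  have hα0 : Tendsto (fun n => ‖α n‖) atTop (nhds 0) := by
    have h := hα.tendsto_atTop_zero
    have h2 : Tendsto (fun n => Real.sqrt (‖α n‖ ^ 2)) atTop (nhds (Real.sqrt 0)) :=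
      (Real.continuous_sqrt.tendsto 0).comp h
    simpa [Real.sqrt_sq (norm_nonneg _)] using h2
  obtain ⟨A, hA⟩ : ∃ A, ∀ n, ‖α n‖ ≤ A := by
    obtain ⟨A, hA⟩ := (hα0.isBoundedUnder_le).bddAbove_range
    exact ⟨A, fun n => hA (Set.mem_range_self n)⟩
  set g : ℕ → ℕ → ℂ := gAux β a α with hg
  -- `αhat` as a sum of the `g k`
  have hαhat' : ∀ n, αhat n = ∑ k ∈ Finset.range (J + 1), g k n := by
    intro n
    rw [hαhat]
    have h1 : ∑ k ∈ Finset.range (min n J + 1), β k * (a (n - k)) ^ k * α (n - k)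
        = ∑ k ∈ Finset.range (min n J + 1), g k n := by
      refine Finset.sum_congr rfl fun k hk => ?_
      simp only [Finset.mem_range] at hk
      have hkn : k ≤ n := le_trans (Nat.lt_succ_iff.mp hk) (min_le_left _ _)
      simp [hg, gAux, hkn]
    rw [h1]
    refine Finset.sum_subset (fun k hk => ?_) (fun k hk hk2 => ?_)
    · simp only [Finset.mem_range] at hk ⊢; omega
    · simp only [Finset.mem_range] at hk hk2
      exact gAux_of_lt β a α (by omega)
  -- square-summability of each `g k`
  have hgsq : ∀ k, Summable fun n => ‖g k n‖ ^ 2 := by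
    intro k
    have h1 : Summable fun n => ‖β k * (a n) ^ k * α n‖ ^ 2 := by
      refine Summable.of_nonneg_of_le (fun n => by positivity) (fun n => ?_)
        (hα.mul_left ((‖β k‖ * M ^ k) ^ 2))
      calc ‖β k * (a n) ^ k * α n‖ ^ 2 = (‖β k‖ * ‖a n‖ ^ k * ‖α n‖) ^ 2 := by
            rw [norm_mul, norm_mul, norm_pow]
        _ ≤ (‖β k‖ * M ^ k * ‖α n‖) ^ 2 := by
            refine pow_le_pow_left₀ (by positivity) ?_ 2
            exact mul_le_mul_of_nonneg_right
              (mul_le_mul_of_nonneg_left (pow_le_pow_left₀ (norm_nonneg _) (hM n) k)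
                (norm_nonneg _)) (norm_nonneg _)
        _ = (‖β k‖ * M ^ k) ^ 2 * ‖α n‖ ^ 2 := by ring
    have h2 : Summable fun n => ‖g k (n + k)‖ ^ 2 := by
      have hrw : ∀ n, g k (n + k) = β k * (a n) ^ k * α n := fun n => gAux_add β a α k n
      simpa only [hrw] using h1
    exact (summable_nat_add_iff k).mp h2
  -- Part 1 via `Memℓp`
  have htwo : ((2 : ENNReal)).toReal = ((2 : ℕ) : ℝ) := by simp
  have hiff : ∀ h : ℕ → ℂ, (Summable fun n => ‖h n‖ ^ 2) ↔ Memℓp h 2 := by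
    intro h
    rw [memℓp_gen_iff (by rw [htwo]; norm_num), htwo]
    simp_rw [Real.rpow_natCast]
  have hmem : ∀ k ∈ Finset.range (J + 1), Memℓp (g k) 2 :=
    fun k _ => (hiff (g k)).mp (hgsq k)
  have hpart1 : Summable fun n => ‖αhat n‖ ^ 2 := by
    rw [hiff]
    have := Memℓp.finset_sum (Finset.range (J + 1)) hmem
    have he : αhat = fun n => ∑ k ∈ Finset.range (J + 1), g k n := funext hαhat'
    rw [he]
    exact this
  refine ⟨hpart1, fun x hx => ?_⟩
  -- Part 2
  set t : ℕ → ℕ → ℂ := fun k n => β k * (a n) ^ k * α n * x ^ (n + k) with ht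
  have hA0 : 0 ≤ A := le_trans (norm_nonneg _) (hA 0)
  have hcoef : ∀ k, 0 ≤ ‖β k‖ * M ^ k * A :=
    fun k => mul_nonneg (mul_nonneg (norm_nonneg _) (pow_nonneg hM0 _)) hA0
  have hbound : ∀ k n, ‖t k n‖ ≤ ‖β k‖ * M ^ k * A * ‖x‖ ^ n := by
    intro k n
    calc ‖t k n‖ = ‖β k‖ * ‖a n‖ ^ k * ‖α n‖ * ‖x‖ ^ (n + k) := by
          rw [ht]; simp [norm_mul, norm_pow]
      _ ≤ ‖β k‖ * M ^ k * A * ‖x‖ ^ (n + k) := by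
          refine mul_le_mul_of_nonneg_right ?_ (by positivity)
          exact mul_le_mul (mul_le_mul_of_nonneg_left
            (pow_le_pow_left₀ (norm_nonneg _) (hM n) k) (norm_nonneg _)) (hA n)
            (norm_nonneg _) (mul_nonneg (norm_nonneg _) (pow_nonneg hM0 _))
      _ ≤ ‖β k‖ * M ^ k * A * ‖x‖ ^ n :=
          mul_le_mul_of_nonneg_left
            (pow_le_pow_of_le_one (norm_nonneg x) hx.le (Nat.le_add_right n k)) (hcoef k)
  have hgeo : Summable fun n : ℕ => ‖x‖ ^ n := summable_geometric_of_lt_one (norm_nonneg x) hx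
  have hts : ∀ k, Summable (t k) := by
    intro k
    refine Summable.of_norm (Summable.of_nonneg_of_le (fun n => norm_nonneg _)
      (hbound k) (hgeo.mul_left _))
  -- expansion of `α n * f n x`
  have hexp : ∀ n, α n * f n x = ∑ k ∈ Finset.range (J + 1), t k n := by
    intro n
    rw [hf, hβ, Finset.mul_sum, Finset.mul_sum]
    refine Finset.sum_congr rfl fun k _ => ?_
    rw [ht]
    ring
  have hsum1 : Summable fun n => α n * f n x := by
    simp only [hexp]
    exact summable_sum fun k _ => hts k
  -- summability of `fun n => g k n * x ^ n`
  have hgx : ∀ k, Summable fun n => g k n * x ^ n := by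
    intro k
    refine Summable.of_norm (Summable.of_nonneg_of_le (fun n => norm_nonneg _)
      (fun n => ?_) (hgeo.mul_left (‖β k‖ * M ^ k * A)))
    by_cases hkn : k ≤ n
    · have he : g k n = β k * (a (n - k)) ^ k * α (n - k) := by
        rw [hg]; simp [gAux, hkn]
      rw [he]
      calc ‖β k * (a (n - k)) ^ k * α (n - k) * x ^ n‖
          = ‖β k‖ * ‖a (n - k)‖ ^ k * ‖α (n - k)‖ * ‖x‖ ^ n := by
            simp [norm_mul, norm_pow]
        _ ≤ ‖β k‖ * M ^ k * A * ‖x‖ ^ n := by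
            refine mul_le_mul_of_nonneg_right ?_ (by positivity)
            exact mul_le_mul (mul_le_mul_of_nonneg_left
              (pow_le_pow_left₀ (norm_nonneg _) (hM _) k) (norm_nonneg _)) (hA _)
              (norm_nonneg _) (mul_nonneg (norm_nonneg _) (pow_nonneg hM0 _))
    · rw [hg, gAux_of_lt β a α (by omega), zero_mul, norm_zero]
      exact mul_nonneg (hcoef k) (pow_nonneg (norm_nonneg _) _)
  -- shift identity
  have hshift : ∀ k, ∑' n, g k n * x ^ n = ∑' n, t k n := by
    intro k
    have hinj : Function.Injective (fun m : ℕ => m + k) := add_left_injective k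
    have hsupp : Function.support (fun n => g k n * x ^ n) ⊆ Set.range (fun m : ℕ => m + k) := by
      intro n hn
      rcases le_or_gt k n with h | h
      · exact ⟨n - k, by show n - k + k = n; omega⟩
      · exact absurd (show g k n * x ^ n = 0 by
          rw [hg, gAux_of_lt β a α h, zero_mul]) hn
    have := hinj.tsum_eq (f := fun n => g k n * x ^ n) hsupp
    rw [← this]
    refine tsum_congr fun m => ?_
    show g k (m + k) * x ^ (m + k) = t k m
    rw [hg, gAux_add β a α k m, ht]
  -- final chain
  refine ⟨hsum1, ?_⟩
  calc ∑' n, α n * f n x = ∑' n, ∑ k ∈ Finset.range (J + 1), t k n := tsum_congr hexp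
    _ = ∑ k ∈ Finset.range (J + 1), ∑' n, t k n := Summable.tsum_finsetSum fun k _ => hts k
    _ = ∑ k ∈ Finset.range (J + 1), ∑' n, g k n * x ^ n :=
        (Finset.sum_congr rfl fun k _ => (hshift k).symm)
    _ = ∑' n, ∑ k ∈ Finset.range (J + 1), g k n * x ^ n := (Summable.tsum_finsetSum fun k _ => hgx k).symm
    _ = ∑' n, αhat n * x ^ n := by
        refine tsum_congr fun n => ?_
        rw [hαhat' n, Finset.sum_mul]
end

section
/- Let p > 0 be a real number and define M : ℕ × ℕ → ℝ by M(n,k) = (p/(k+2))·((k+2)/(n+1))^p if n > k, and M(n,k) = 0 if n ≤ k. Then M is the matrix of a bounded operator on ℓ² — i.e., there exists a constant C > 0 such that for all finitely supported sequences x, y : ℕ → ℝ with nonnegative entries, Σ_{n,k} M(n,k)·x(k)·y(n) ≤ C·(Σ_k x(k)²)^{1/2}·(Σ_n y(n)²)^{1/2} — if and only if p > 1/2. -/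
open Finset Filter Real

private lemma rpow_slope {a : ℝ} (r : ℝ) (ha : (0:ℝ) < a) :
    ∃ c ∈ Set.Ioo a (a+1), (a+1)^r - a^r = r * c^(r-1) := by
  have h : a < a + 1 := by linarith
  obtain ⟨c, hc, hc2⟩ := exists_hasDerivAt_eq_slope (fun x : ℝ => x ^ r)
    (fun x => r * x ^ (r-1)) h
    (fun x hx => (Real.continuousAt_rpow_const x r
      (Or.inl (by have := hx.1; intro h0; rw [h0] at this; linarith))).continuousWithinAt)
    (fun x hx => Real.hasDerivAt_rpow_const
      (Or.inl (by have := hx.1; intro h0; rw [h0] at this; linarith)))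
  refine ⟨c, hc, ?_⟩
  rw [hc2]; simp

private lemma up_bound {r a : ℝ} (hr : 0 < r) (ha : 1 ≤ a) :
    a ^ (r - 1) ≤ (max 1 (2 ^ (1 - r)) / r) * ((a+1)^r - a^r) := by
  have ha0 : (0:ℝ) < a := by linarith
  obtain ⟨c, hc, hdiff⟩ := rpow_slope r ha0
  have hc0 : 0 < c := by have := hc.1; linarith
  have key : a ^ (r-1) ≤ max 1 (2 ^ (1-r)) * c ^ (r-1) := by
    rcases le_or_gt 1 r with h1 | h1
    · have h2 : a ^ (r-1) ≤ c ^ (r-1) :=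
        Real.rpow_le_rpow ha0.le hc.1.le (by linarith)
      have h4 : 0 ≤ c ^ (r-1) := (Real.rpow_pos_of_pos hc0 _).le
      nlinarith [le_max_left (1:ℝ) (2 ^ (1-r))]
    · have h2 : (2*a) ^ (r-1) ≤ c ^ (r-1) :=
        Real.rpow_le_rpow_of_nonpos hc0 (by nlinarith [hc.2]) (by linarith)
      rw [Real.mul_rpow (by norm_num) ha0.le] at h2
      have h3 : (0:ℝ) < 2 ^ (r-1) := Real.rpow_pos_of_pos (by norm_num) _
      have h5 : (2:ℝ) ^ (1-r) * 2 ^ (r-1) = 1 := by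
        rw [← Real.rpow_add (by norm_num)]; norm_num
      have h6 : (2:ℝ) ^ (1-r) ≤ max 1 (2 ^ (1-r)) := le_max_right _ _
      have h7 : 0 ≤ c ^ (r-1) := (Real.rpow_pos_of_pos hc0 _).le
      have h8 : a ^ (r-1) ≤ 2 ^ (1-r) * c ^ (r-1) := by
        calc a ^ (r-1) = 2 ^ (1-r) * (2 ^ (r-1) * a ^ (r-1)) := by
              rw [← mul_assoc, h5, one_mul]
          _ ≤ 2 ^ (1-r) * c ^ (r-1) := by
              apply mul_le_mul_of_nonneg_left h2 (by positivity)
      exact h8.trans (mul_le_mul_of_nonneg_right h6 h7)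
  rw [hdiff]
  calc a ^ (r-1) ≤ max 1 (2 ^ (1-r)) * c ^ (r-1) := key
    _ = (max 1 (2 ^ (1-r)) / r) * (r * c ^ (r-1)) := by field_simp

private lemma T1 {r : ℝ} (hr : 0 < r) (n : ℕ) :
    ∑ k ∈ range n, ((k:ℝ)+1) ^ (r-1) ≤ (max 1 (2 ^ (1-r)) / r) * ((n:ℝ)+1) ^ r := by
  induction n with
  | zero =>
    simp only [range_zero, sum_empty, Nat.cast_zero, zero_add]
    have h3 : (0:ℝ) ≤ max 1 (2 ^ (1-r)) := le_trans zero_le_one (le_max_left _ _)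
    exact mul_nonneg (div_nonneg h3 hr.le) (Real.rpow_nonneg (by norm_num) _)
  | succ n ih =>
    rw [Finset.sum_range_succ]
    have hb := up_bound hr (a := (n:ℝ)+1) (by have := Nat.cast_nonneg (α := ℝ) n; linarith)
    rw [mul_sub] at hb
    push_cast
    rw [show ((n:ℝ)+1+1) = (((n:ℝ)+1)+1) from by ring]
    linarith [ih, hb]

private lemma tail_bound {q a : ℝ} (hq : 1 < q) (ha : 1 ≤ a) :
    (a+1) ^ (-q) ≤ (1/(q-1)) * (a ^ (1-q) - (a+1) ^ (1-q)) := by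
  have ha0 : (0:ℝ) < a := by linarith
  obtain ⟨c, hc, hdiff⟩ := rpow_slope (1-q) ha0
  have hc0 : 0 < c := by have := hc.1; linarith
  have h1 : (1-q) - 1 = -q := by ring
  rw [h1] at hdiff
  have h2 : (a+1) ^ (-q) ≤ c ^ (-q) :=
    Real.rpow_le_rpow_of_nonpos hc0 hc.2.le (by linarith)
  have h3 : a ^ (1-q) - (a+1) ^ (1-q) = (q-1) * c ^ (-q) := by linarith [hdiff]
  rw [h3, one_div, inv_mul_cancel_left₀ (by linarith : q - 1 ≠ 0)]
  exact h2

private lemma T2 {q : ℝ} (hq : 1 < q) (k m : ℕ) :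
    ∑ n ∈ Finset.Ioc k (k+m), ((n:ℝ)+1) ^ (-q) ≤ (1/(q-1)) * ((k:ℝ)+1) ^ (1-q) := by
  have key : ∀ m : ℕ, ∑ n ∈ Finset.Ioc k (k+m), ((n:ℝ)+1) ^ (-q) ≤
      (1/(q-1)) * (((k:ℝ)+1) ^ (1-q) - (((k:ℝ)+(m:ℝ))+1) ^ (1-q)) := by
    intro m
    induction m with
    | zero => simp
    | succ m ih =>
      rw [show k + (m+1) = (k+m) + 1 from rfl,
        Finset.sum_Ioc_succ_top (Nat.le_add_right k m)]
      have hb := tail_bound hq (a := ((k:ℝ)+(m:ℝ))+1)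
        (by have h1 := Nat.cast_nonneg (α := ℝ) k; have h2 := Nat.cast_nonneg (α := ℝ) m
            linarith)
      rw [mul_sub] at hb ih ⊢
      push_cast
      rw [show (k:ℝ) + ((m:ℝ)+1) + 1 = (k:ℝ)+(m:ℝ)+1+1 from by ring]
      linarith [ih, hb]
  have h := key m
  rw [mul_sub] at h
  have hnn : (0:ℝ) ≤ (((k:ℝ)+(m:ℝ))+1) ^ (1-q) := Real.rpow_nonneg (by have h1 := Nat.cast_nonneg (α := ℝ) k; have h2 := Nat.cast_nonneg (α := ℝ) m; linarith) _
  have hq1 : (0:ℝ) < 1/(q-1) := by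
    have h0 : (0:ℝ) < q - 1 := by linarith
    positivity
  nlinarith [mul_nonneg hq1.le hnn]

private lemma low_bound {q a : ℝ} (hq0 : 0 ≤ q) (hq : q < 1) (ha : 1 ≤ a) :
    ((a+1) ^ (1-q) - a ^ (1-q))/(1-q) ≤ a ^ (-q) := by
  have ha0 : (0:ℝ) < a := by linarith
  obtain ⟨c, hc, hdiff⟩ := rpow_slope (1-q) ha0
  have hc0 : 0 < c := by have := hc.1; linarith
  have h1 : (1-q) - 1 = -q := by ring
  rw [h1] at hdiff
  have h2 : c ^ (-q) ≤ a ^ (-q) :=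
    Real.rpow_le_rpow_of_nonpos ha0 hc.1.le (by linarith)
  rw [hdiff, mul_div_cancel_left₀ _ (by linarith : (1:ℝ)-q ≠ 0)]
  exact h2

private lemma T3 {q : ℝ} (hq0 : 0 ≤ q) (hq : q < 1) (N : ℕ) :
    (((N:ℝ)+1) ^ (1-q) - 1)/(1-q) ≤ ∑ n ∈ range N, ((n:ℝ)+1) ^ (-q) := by
  induction N with
  | zero => simp
  | succ N ih =>
    rw [Finset.sum_range_succ]
    have hb := low_bound hq0 hq (a := (N:ℝ)+1)
      (by have := Nat.cast_nonneg (α := ℝ) N; linarith)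
    have e : ((((N:ℝ)+1)+1) ^ (1-q) - 1)/(1-q) =
        (((N:ℝ)+1) ^ (1-q) - 1)/(1-q) + ((((N:ℝ)+1)+1) ^ (1-q) - ((N:ℝ)+1) ^ (1-q))/(1-q) := by
      ring
    push_cast
    rw [e]
    linarith [hb, ih]



private lemma log_succ_le {a : ℝ} (ha : 0 < a) :
    Real.log (a+1) - Real.log a ≤ 1/a := by
  have h1 : Real.log ((a+1)/a) ≤ (a+1)/a - 1 :=
    Real.log_le_sub_one_of_pos (by positivity)
  rw [Real.log_div (by linarith) (by linarith)] at h1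
  have h2 : (a+1)/a - 1 = 1/a := by field_simp; ring
  linarith [h1, h2.le, h2.ge]

private lemma le_log_succ {a : ℝ} (ha : 0 < a) :
    1/(a+1) ≤ Real.log (a+1) - Real.log a := by
  have h1 : Real.log (a/(a+1)) ≤ a/(a+1) - 1 :=
    Real.log_le_sub_one_of_pos (by positivity)
  rw [Real.log_div (by linarith) (by linarith)] at h1
  have h2 : a/(a+1) - 1 = -(1/(a+1)) := by field_simp; ring
  linarith [h1, h2.le, h2.ge]

private lemma harmonic_le (N : ℕ) :
    ∑ k ∈ range N, 1/((k:ℝ)+1) ≤ 1 + Real.log N := by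
  induction N with
  | zero => simp
  | succ N ih =>
    rcases Nat.eq_zero_or_pos N with h | h
    · subst h; simp
    · rw [Finset.sum_range_succ]
      have hN : (0:ℝ) < N := by exact_mod_cast h
      have hb := le_log_succ hN
      push_cast
      linarith [ih, hb]

private lemma sum_inv_ge_log (n : ℕ) :
    Real.log ((n:ℝ)+2) - Real.log 2 ≤ ∑ k ∈ range n, 1/((k:ℝ)+2) := by
  induction n with
  | zero => simp
  | succ n ih =>
    rw [Finset.sum_range_succ]
    have hb := log_succ_le (a := (n:ℝ)+2) (by positivity)
    push_cast
    rw [show (n:ℝ)+1+2 = ((n:ℝ)+2)+1 from by ring]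
    linarith [ih, hb]

private lemma logsq_slope {a : ℝ} (ha : 1 ≤ a) :
    ∃ c ∈ Set.Ioo a (a+1),
      (Real.log (a+1))^2/2 - (Real.log a)^2/2 = Real.log c / c := by
  have h : a < a + 1 := by linarith
  obtain ⟨c, hc, hc2⟩ := exists_hasDerivAt_eq_slope (fun x : ℝ => (Real.log x)^2/2)
    (fun x => Real.log x / x) h
    (by
      apply ContinuousOn.div_const
      apply ContinuousOn.pow
      apply Real.continuousOn_log.mono
      intro x hx
      simp only [Set.mem_compl_iff, Set.mem_singleton_iff]
      have := hx.1; intro h0; rw [h0] at this; linarith)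
    (fun x hx => by
      have hx0 : (0:ℝ) < x := by have := hx.1; linarith
      have hd := ((Real.hasDerivAt_log hx0.ne').fun_pow 2).div_const 2
      refine hd.congr_deriv ?_
      field_simp
      ring)
  refine ⟨c, hc, ?_⟩
  rw [hc2]; simp

private lemma logsq_lower (N : ℕ) :
    (Real.log ((N:ℝ)+1))^2/2 ≤ ∑ n ∈ range N, Real.log ((n:ℝ)+2)/((n:ℝ)+1) := by
  induction N with
  | zero => simp
  | succ N ih =>
    rw [Finset.sum_range_succ]
    obtain ⟨c, hc, hdiff⟩ := logsq_slope (a := (N:ℝ)+1)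
      (by have := Nat.cast_nonneg (α := ℝ) N; linarith)
    have hc0 : (0:ℝ) < c := by have := hc.1; have := Nat.cast_nonneg (α := ℝ) N; linarith
    have hN1 : (0:ℝ) < (N:ℝ)+1 := by positivity
    have hlogc : Real.log c ≤ Real.log ((N:ℝ)+2) :=
      Real.log_le_log hc0 (by have := hc.2; linarith)
    have hlogc0 : 0 ≤ Real.log c := Real.log_nonneg (by have := hc.1; linarith)
    have hkey : Real.log c / c ≤ Real.log ((N:ℝ)+2) / ((N:ℝ)+1) :=
      div_le_div₀ (Real.log_nonneg (by have := Nat.cast_nonneg (α := ℝ) N; linarith))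
        hlogc hN1 hc.1.le
    push_cast
    rw [show (N:ℝ)+1+1 = ((N:ℝ)+1)+1 from by ring]
    linarith [ih, hdiff.le, hdiff.ge, hkey]



noncomputable def ww (m : ℕ) : ℝ := ((m:ℝ)+1) ^ (-(1/2) : ℝ)

private lemma ww_pos (m : ℕ) : 0 < ww m := Real.rpow_pos_of_pos (by positivity) _

private lemma succ_rpow {a e : ℝ} (ha : 1 ≤ a) :
    (a+1) ^ e ≤ max 1 (2 ^ e) * a ^ e := by
  have ha0 : (0:ℝ) < a := by linarith
  rcases le_or_gt 0 e with h | h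
  · calc (a+1) ^ e ≤ (2*a) ^ e := Real.rpow_le_rpow (by linarith) (by linarith) h
      _ = 2 ^ e * a ^ e := Real.mul_rpow (by norm_num) ha0.le
      _ ≤ max 1 (2 ^ e) * a ^ e :=
        mul_le_mul_of_nonneg_right (le_max_right _ _) (Real.rpow_nonneg ha0.le _)
  · calc (a+1) ^ e ≤ a ^ e := Real.rpow_le_rpow_of_nonpos ha0 (by linarith) h.le
      _ ≤ max 1 (2 ^ e) * a ^ e :=
        le_mul_of_one_le_left (Real.rpow_nonneg ha0.le _) (le_max_left _ _)

section
variable (p : ℝ)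

private lemma Mentry {p : ℝ} (hp : 0 < p) {M : ℕ → ℕ → ℝ}
    (hM : ∀ n k : ℕ, M n k =
      if k < n then (p / ((k : ℝ) + 2)) * (((k : ℝ) + 2) / ((n : ℝ) + 1)) ^ p else 0)
    {n k : ℕ} (h : k < n) :
    M n k = p * ((k:ℝ)+2) ^ (p-1) * ((n:ℝ)+1) ^ (-p) := by
  rw [hM, if_pos h]
  have hk : (0:ℝ) < (k:ℝ)+2 := by positivity
  have hn : (0:ℝ) < (n:ℝ)+1 := by positivity
  rw [Real.div_rpow hk.le hn.le, Real.rpow_sub hk, Real.rpow_one, Real.rpow_neg hn.le]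
  field_simp

private lemma Mnonneg {p : ℝ} (hp : 0 < p) {M : ℕ → ℕ → ℝ}
    (hM : ∀ n k : ℕ, M n k =
      if k < n then (p / ((k : ℝ) + 2)) * (((k : ℝ) + 2) / ((n : ℝ) + 1)) ^ p else 0)
    (n k : ℕ) : 0 ≤ M n k := by
  rw [hM]
  split
  · have hk : (0:ℝ) < (k:ℝ)+2 := by positivity
    have hn : (0:ℝ) < (n:ℝ)+1 := by positivity
    positivity
  · exact le_rfl
end

private lemma row_bd {p : ℝ} (hp : 0 < p) (hp2 : 1/2 < p) {M : ℕ → ℕ → ℝ}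
    (hM : ∀ n k : ℕ, M n k =
      if k < n then (p / ((k : ℝ) + 2)) * (((k : ℝ) + 2) / ((n : ℝ) + 1)) ^ p else 0)
    {n N : ℕ} (hnN : n < N) :
    ∑ k ∈ range N, M n k * ww k ≤
      (p * max 1 (2 ^ (p-1)) * (max 1 (2 ^ (1-(p-1/2))) / (p-1/2))) * ww n := by
  have hr : 0 < p - 1/2 := by linarith
  set c2 : ℝ := max 1 (2 ^ (p-1)) with hc2
  set K1 : ℝ := max 1 (2 ^ (1-(p-1/2))) / (p-1/2) with hK1
  have hc2pos : 0 < c2 := lt_of_lt_of_le one_pos (le_max_left _ _)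
  have hK1pos : 0 < K1 := by
    apply div_pos (lt_of_lt_of_le one_pos (le_max_left _ _)) hr
  -- restrict to range n
  have step1 : ∑ k ∈ range N, M n k * ww k = ∑ k ∈ range n, M n k * ww k := by
    symm
    apply Finset.sum_subset (Finset.range_subset_range.mpr hnN.le)
    intro k _ hk
    rw [hM, if_neg (by simpa using hk)]
    ring
  rw [step1]
  have term_bd : ∀ k ∈ range n, M n k * ww k ≤
      (p * c2 * ((n:ℝ)+1) ^ (-p)) * ((k:ℝ)+1) ^ ((p-1/2)-1) := by
    intro k hk
    have hkn : k < n := Finset.mem_range.mp hk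
    rw [Mentry hp hM hkn]
    have hk1 : (1:ℝ) ≤ (k:ℝ)+1 := by have := Nat.cast_nonneg (α := ℝ) k; linarith
    have h1 : ((k:ℝ)+2) ^ (p-1) ≤ c2 * ((k:ℝ)+1) ^ (p-1) := by
      have := succ_rpow (a := (k:ℝ)+1) (e := p-1) hk1
      rw [show (k:ℝ)+1+1 = (k:ℝ)+2 from by ring] at this
      exact this
    have h2 : ((k:ℝ)+1) ^ (p-1) * ((k:ℝ)+1) ^ (-(1/2):ℝ) = ((k:ℝ)+1) ^ ((p-1/2)-1) := by
      rw [← Real.rpow_add (by positivity)]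
      congr 1; ring
    have hnp : (0:ℝ) ≤ ((n:ℝ)+1) ^ (-p) := Real.rpow_nonneg (by positivity) _
    have hwk : (0:ℝ) ≤ ww k := (ww_pos k).le
    calc p * ((k:ℝ)+2) ^ (p-1) * ((n:ℝ)+1) ^ (-p) * ww k
        ≤ p * (c2 * ((k:ℝ)+1) ^ (p-1)) * ((n:ℝ)+1) ^ (-p) * ww k := by
          apply mul_le_mul_of_nonneg_right _ hwk
          apply mul_le_mul_of_nonneg_right _ hnp
          exact mul_le_mul_of_nonneg_left h1 hp.le
      _ = (p * c2 * ((n:ℝ)+1) ^ (-p)) * (((k:ℝ)+1) ^ (p-1) * ((k:ℝ)+1) ^ (-(1/2):ℝ)) := by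
          rw [ww]; ring
      _ = (p * c2 * ((n:ℝ)+1) ^ (-p)) * ((k:ℝ)+1) ^ ((p-1/2)-1) := by rw [h2]
  calc ∑ k ∈ range n, M n k * ww k
      ≤ ∑ k ∈ range n, (p * c2 * ((n:ℝ)+1) ^ (-p)) * ((k:ℝ)+1) ^ ((p-1/2)-1) :=
        Finset.sum_le_sum term_bd
    _ = (p * c2 * ((n:ℝ)+1) ^ (-p)) * ∑ k ∈ range n, ((k:ℝ)+1) ^ ((p-1/2)-1) := by
        rw [Finset.mul_sum]
    _ ≤ (p * c2 * ((n:ℝ)+1) ^ (-p)) * (K1 * ((n:ℝ)+1) ^ (p-1/2)) := by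
        apply mul_le_mul_of_nonneg_left (T1 hr n) (by positivity)
    _ = (p * c2 * K1) * (((n:ℝ)+1) ^ (-p) * ((n:ℝ)+1) ^ (p-1/2)) := by ring
    _ = (p * c2 * K1) * ww n := by
        rw [← Real.rpow_add (by positivity : (0:ℝ) < (n:ℝ)+1), ww]
        congr 1; ring
private lemma col_bd {p : ℝ} (hp : 0 < p) (hp2 : 1/2 < p) {M : ℕ → ℕ → ℝ}
    (hM : ∀ n k : ℕ, M n k =
      if k < n then (p / ((k : ℝ) + 2)) * (((k : ℝ) + 2) / ((n : ℝ) + 1)) ^ p else 0)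
    (k N : ℕ) :
    ∑ n ∈ range N, M n k * ww n ≤ (p * max 1 (2 ^ (p-1)) / (p-1/2)) * ww k := by
  have hr : 0 < p - 1/2 := by linarith
  set c2 : ℝ := max 1 (2 ^ (p-1)) with hc2
  have hc2pos : (0:ℝ) < c2 := lt_of_lt_of_le one_pos (le_max_left _ _)
  have hk1 : (1:ℝ) ≤ (k:ℝ)+1 := by have := Nat.cast_nonneg (α := ℝ) k; linarith
  set g : ℕ → ℝ := fun n => (p * ((k:ℝ)+2) ^ (p-1)) * ((n:ℝ)+1) ^ (-(p+1/2)) with hg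
  have hgnn : ∀ n, 0 ≤ g n := by
    intro n
    apply mul_nonneg (mul_nonneg hp.le (Real.rpow_nonneg (by positivity) _))
      (Real.rpow_nonneg (by positivity) _)
  have step1 : ∑ n ∈ range N, M n k * ww n ≤ ∑ n ∈ Finset.Ioc k (k+N), g n := by
    have e1 : ∀ n ∈ range N, M n k * ww n = if k < n then g n else 0 := by
      intro n _
      by_cases h : k < n
      · rw [if_pos h, Mentry hp hM h, hg, ww]
        simp only
        have e2 : ((n:ℝ)+1) ^ (-p) * ((n:ℝ)+1) ^ (-(1/2):ℝ) = ((n:ℝ)+1) ^ (-(p+1/2)) := by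
          rw [← Real.rpow_add (by positivity : (0:ℝ) < (n:ℝ)+1)]
          congr 1; ring
        rw [mul_assoc, e2]
      · rw [if_neg h, hM, if_neg h]; ring
    rw [Finset.sum_congr rfl e1, ← Finset.sum_filter]
    apply Finset.sum_le_sum_of_subset_of_nonneg
    · intro n hn
      simp only [Finset.mem_filter, Finset.mem_range] at hn
      exact Finset.mem_Ioc.mpr ⟨hn.2, by omega⟩
    · intro n _ _; exact hgnn n
  have step2 : ∑ n ∈ Finset.Ioc k (k+N), g n ≤
      (p * ((k:ℝ)+2) ^ (p-1)) * ((1/(p-1/2)) * ((k:ℝ)+1) ^ (1-(p+1/2))) := by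
    rw [hg, ← Finset.mul_sum]
    apply mul_le_mul_of_nonneg_left _ (mul_nonneg hp.le (Real.rpow_nonneg (by positivity) _))
    have := T2 (q := p+1/2) (by linarith) k N
    rw [show p+1/2-1 = p-1/2 from by ring] at this
    exact this
  refine step1.trans (step2.trans ?_)
  have h1 : ((k:ℝ)+2) ^ (p-1) ≤ c2 * ((k:ℝ)+1) ^ (p-1) := by
    have := succ_rpow (a := (k:ℝ)+1) (e := p-1) hk1
    rw [show (k:ℝ)+1+1 = (k:ℝ)+2 from by ring] at this
    exact this
  have h2 : ((k:ℝ)+1) ^ (p-1) * ((k:ℝ)+1) ^ (1-(p+1/2)) = ww k := by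
    rw [ww, ← Real.rpow_add (by positivity)]
    congr 1; ring
  have hnn1 : (0:ℝ) ≤ ((k:ℝ)+1) ^ (1-(p+1/2)) := Real.rpow_nonneg (by positivity) _
  calc (p * ((k:ℝ)+2) ^ (p-1)) * ((1/(p-1/2)) * ((k:ℝ)+1) ^ (1-(p+1/2)))
      ≤ (p * (c2 * ((k:ℝ)+1) ^ (p-1))) * ((1/(p-1/2)) * ((k:ℝ)+1) ^ (1-(p+1/2))) := by
        apply mul_le_mul_of_nonneg_right _ (mul_nonneg (by positivity) hnn1)
        exact mul_le_mul_of_nonneg_left h1 hp.le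
    _ = (p * c2 / (p-1/2)) * (((k:ℝ)+1) ^ (p-1) * ((k:ℝ)+1) ^ (1-(p+1/2))) := by
        field_simp
    _ = (p * c2 / (p-1/2)) * ww k := by rw [h2]
private lemma support_bd {x : ℕ → ℝ} (hx : (Function.support x).Finite) :
    ∃ N : ℕ, ∀ k, N ≤ k → x k = 0 := by
  obtain ⟨b, hb⟩ := hx.bddAbove
  refine ⟨b+1, fun k hk => ?_⟩
  by_contra h
  have : k ∈ Function.support x := Function.mem_support.mpr h
  have := hb this
  omega

private lemma tsum_reduce {M : ℕ → ℕ → ℝ} {x y : ℕ → ℝ} {N : ℕ}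
    (hx : ∀ k, N ≤ k → x k = 0) (hy : ∀ n, N ≤ n → y n = 0) :
    ∑' (n:ℕ), ∑' (k:ℕ), M n k * x k * y n
      = ∑ n ∈ range N, ∑ k ∈ range N, M n k * x k * y n := by
  rw [tsum_eq_sum (s := range N) (fun n hn => by
    have hyn : y n = 0 := hy n (by simpa using hn)
    have : ∀ k, M n k * x k * y n = 0 := fun k => by rw [hyn]; ring
    simp only [this, tsum_zero])]
  apply Finset.sum_congr rfl
  intro n _
  exact tsum_eq_sum (fun k hk => by rw [hx k (by simpa using hk)]; ring)

private lemma forward {p : ℝ} (hp : 0 < p) (hp2 : 1/2 < p) {M : ℕ → ℕ → ℝ}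
    (hM : ∀ n k : ℕ, M n k =
      if k < n then (p / ((k : ℝ) + 2)) * (((k : ℝ) + 2) / ((n : ℝ) + 1)) ^ p else 0) :
    ∃ C > (0 : ℝ), ∀ x y : ℕ → ℝ, (∀ k, 0 ≤ x k) → (∀ n, 0 ≤ y n) →
        (Function.support x).Finite → (Function.support y).Finite →
        ∑' (n : ℕ), ∑' (k : ℕ), M n k * x k * y n ≤
          C * Real.sqrt (∑' k, x k ^ 2) * Real.sqrt (∑' n, y n ^ 2) := by
  set C1 : ℝ := p * max 1 (2 ^ (p-1)) * (max 1 (2 ^ (1-(p-1/2))) / (p-1/2)) with hC1def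
  set C2 : ℝ := p * max 1 (2 ^ (p-1)) / (p-1/2) with hC2def
  have hr : (0:ℝ) < p - 1/2 := by linarith
  have hmax1 : (0:ℝ) < max 1 (2 ^ (p-1)) := lt_of_lt_of_le one_pos (le_max_left _ _)
  have hmax2 : (0:ℝ) < max 1 (2 ^ (1-(p-1/2))) := lt_of_lt_of_le one_pos (le_max_left _ _)
  have hC1 : 0 < C1 := by
    apply mul_pos (mul_pos hp hmax1) (div_pos hmax2 hr)
  have hC2 : 0 < C2 := div_pos (mul_pos hp hmax1) hr
  refine ⟨Real.sqrt (C1 * C2), Real.sqrt_pos.mpr (mul_pos hC1 hC2), ?_⟩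
  intro x y hx hy hfx hfy
  obtain ⟨Nx, hNx⟩ := support_bd hfx
  obtain ⟨Ny, hNy⟩ := support_bd hfy
  set N : ℕ := max Nx Ny with hN
  have hx0 : ∀ k, N ≤ k → x k = 0 := fun k hk => hNx k (le_trans (le_max_left _ _) hk)
  have hy0 : ∀ n, N ≤ n → y n = 0 := fun n hn => hNy n (le_trans (le_max_right _ _) hn)
  rw [tsum_reduce hx0 hy0,
    tsum_eq_sum (s := range N) (fun k hk => by rw [hx0 k (by simpa using hk)]; ring),
    tsum_eq_sum (s := range N) (fun n hn => by rw [hy0 n (by simpa using hn)]; ring)]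
  set s : Finset (ℕ × ℕ) := range N ×ˢ range N with hs
  set F : ℕ × ℕ → ℝ := fun q => Real.sqrt (M q.1 q.2 * ww q.2 / ww q.1) * y q.1 with hF
  set G : ℕ × ℕ → ℝ := fun q => Real.sqrt (M q.1 q.2 * ww q.1 / ww q.2) * x q.2 with hG
  have harg : ∀ n k : ℕ, 0 ≤ M n k * ww k / ww n :=
    fun n k => div_nonneg (mul_nonneg (Mnonneg hp hM n k) (ww_pos k).le) (ww_pos n).le
  have hFG : ∀ q ∈ s, M q.1 q.2 * x q.2 * y q.1 = F q * G q := by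
    intro q _
    obtain ⟨n, k⟩ := q
    simp only [hF, hG]
    rw [show Real.sqrt (M n k * ww k / ww n) * y n * (Real.sqrt (M n k * ww n / ww k) * x k)
        = (Real.sqrt (M n k * ww k / ww n) * Real.sqrt (M n k * ww n / ww k)) * (x k * y n)
      from by ring]
    rw [← Real.sqrt_mul (harg n k)]
    have hwn := ww_pos n
    have hwk := ww_pos k
    have e : M n k * ww k / ww n * (M n k * ww n / ww k) = (M n k) ^ 2 := by
      field_simp
    rw [e, Real.sqrt_sq (Mnonneg hp hM n k)]
    ring
  have key : ∑ n ∈ range N, ∑ k ∈ range N, M n k * x k * y n = ∑ q ∈ s, F q * G q := by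
    rw [hs, ← Finset.sum_product' (f := fun n k => M n k * x k * y n)]
    exact Finset.sum_congr rfl hFG
  rw [key]
  have hF2 : ∑ q ∈ s, F q ^ 2 ≤ C1 * ∑ n ∈ range N, y n ^ 2 := by
    rw [hs, Finset.sum_product (f := fun q => F q ^ 2)]
    have hterm : ∀ n ∈ range N, ∑ k ∈ range N, F (n, k) ^ 2 ≤ C1 * y n ^ 2 := by
      intro n hn
      have e1 : ∀ k ∈ range N, F (n, k) ^ 2 = (M n k * ww k) * (y n ^ 2 / ww n) := by
        intro k _
        simp only [hF]
        rw [mul_pow, Real.sq_sqrt (harg n k)]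
        ring
      rw [Finset.sum_congr rfl e1, ← Finset.sum_mul]
      have hrow := row_bd hp hp2 hM (Finset.mem_range.mp hn)
      calc (∑ k ∈ range N, M n k * ww k) * (y n ^ 2 / ww n)
          ≤ (C1 * ww n) * (y n ^ 2 / ww n) := by
            apply mul_le_mul_of_nonneg_right hrow
              (div_nonneg (sq_nonneg _) (ww_pos n).le)
        _ = C1 * (y n ^ 2 / ww n * ww n) := by ring
        _ = C1 * y n ^ 2 := by rw [div_mul_cancel₀ _ (ww_pos n).ne']
    calc ∑ n ∈ range N, ∑ k ∈ range N, F (n, k) ^ 2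
        ≤ ∑ n ∈ range N, C1 * y n ^ 2 := Finset.sum_le_sum hterm
      _ = C1 * ∑ n ∈ range N, y n ^ 2 := by rw [Finset.mul_sum]
  have hG2 : ∑ q ∈ s, G q ^ 2 ≤ C2 * ∑ k ∈ range N, x k ^ 2 := by
    rw [hs, Finset.sum_product (f := fun q => G q ^ 2), Finset.sum_comm]
    have hterm : ∀ k ∈ range N, ∑ n ∈ range N, G (n, k) ^ 2 ≤ C2 * x k ^ 2 := by
      intro k hk
      have e1 : ∀ n ∈ range N, G (n, k) ^ 2 = (M n k * ww n) * (x k ^ 2 / ww k) := by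
        intro n _
        simp only [hG]
        rw [mul_pow, Real.sq_sqrt (div_nonneg (mul_nonneg (Mnonneg hp hM n k) (ww_pos n).le)
          (ww_pos k).le)]
        ring
      rw [Finset.sum_congr rfl e1, ← Finset.sum_mul]
      have hcol := col_bd hp hp2 hM k N
      calc (∑ n ∈ range N, M n k * ww n) * (x k ^ 2 / ww k)
          ≤ (C2 * ww k) * (x k ^ 2 / ww k) := by
            apply mul_le_mul_of_nonneg_right hcol
              (div_nonneg (sq_nonneg _) (ww_pos k).le)
        _ = C2 * (x k ^ 2 / ww k * ww k) := by ring
        _ = C2 * x k ^ 2 := by rw [div_mul_cancel₀ _ (ww_pos k).ne']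
    calc ∑ k ∈ range N, ∑ n ∈ range N, G (n, k) ^ 2
        ≤ ∑ k ∈ range N, C2 * x k ^ 2 := Finset.sum_le_sum hterm
      _ = C2 * ∑ k ∈ range N, x k ^ 2 := by rw [Finset.mul_sum]
  have hCS := Real.sum_mul_le_sqrt_mul_sqrt s F G
  have hTx : (0:ℝ) ≤ ∑ k ∈ range N, x k ^ 2 := Finset.sum_nonneg (fun k _ => sq_nonneg _)
  have hTy : (0:ℝ) ≤ ∑ n ∈ range N, y n ^ 2 := Finset.sum_nonneg (fun n _ => sq_nonneg _)
  calc ∑ q ∈ s, F q * G q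
      ≤ Real.sqrt (∑ q ∈ s, F q ^ 2) * Real.sqrt (∑ q ∈ s, G q ^ 2) := hCS
    _ ≤ Real.sqrt (C1 * ∑ n ∈ range N, y n ^ 2) * Real.sqrt (C2 * ∑ k ∈ range N, x k ^ 2) := by
        apply mul_le_mul (Real.sqrt_le_sqrt hF2) (Real.sqrt_le_sqrt hG2)
          (Real.sqrt_nonneg _) (Real.sqrt_nonneg _)
    _ = Real.sqrt (C1 * C2) * Real.sqrt (∑ k ∈ range N, x k ^ 2)
          * Real.sqrt (∑ n ∈ range N, y n ^ 2) := by
        rw [Real.sqrt_mul hC1.le, Real.sqrt_mul hC2.le, Real.sqrt_mul hC1.le]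
        ring
private lemma quad_tendsto {a : ℝ} (ha : 0 < a) (b c : ℝ) :
    Tendsto (fun u : ℝ => a*u^2 - b*u - c) atTop atTop := by
  have hbase : Tendsto (fun u : ℝ => u - c) atTop atTop :=
    (tendsto_atTop_add_const_right atTop (-c) tendsto_id).congr
      (fun u => by simp [sub_eq_add_neg])
  apply tendsto_atTop_mono' atTop _ hbase
  filter_upwards [eventually_ge_atTop (max 1 ((b+1)/a))] with u hu
  have h1 : (1:ℝ) ≤ u := le_trans (le_max_left _ _) hu
  have h2 : (b+1)/a ≤ u := le_trans (le_max_right _ _) hu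
  have h3 : b + 1 ≤ a * u := by
    rw [div_le_iff₀ ha] at h2; linarith [h2]
  nlinarith

private lemma reverse {p : ℝ} (hp : 0 < p) {M : ℕ → ℕ → ℝ}
    (hM : ∀ n k : ℕ, M n k =
      if k < n then (p / ((k : ℝ) + 2)) * (((k : ℝ) + 2) / ((n : ℝ) + 1)) ^ p else 0)
    (hbd : ∃ C > (0 : ℝ), ∀ x y : ℕ → ℝ, (∀ k, 0 ≤ x k) → (∀ n, 0 ≤ y n) →
        (Function.support x).Finite → (Function.support y).Finite →
        ∑' (n : ℕ), ∑' (k : ℕ), M n k * x k * y n ≤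
          C * Real.sqrt (∑' k, x k ^ 2) * Real.sqrt (∑' n, y n ^ 2)) :
    1/2 < p := by
  by_contra hle
  push_neg at hle
  obtain ⟨C, hC, hb⟩ := hbd
  -- the key bound for the test vectors
  have key : ∀ N : ℕ,
      ∑ n ∈ range N, (∑ k ∈ range n, M n k * ww k) * ww n ≤ C * (1 + Real.log N) := by
    intro N
    set xN : ℕ → ℝ := fun k => if k < N then ww k else 0 with hxN
    have hxnn : ∀ k, 0 ≤ xN k := by
      intro k; simp only [hxN]; split
      · exact (ww_pos k).le
      · exact le_rfl
    have hx0 : ∀ k, N ≤ k → xN k = 0 := by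
      intro k hk; simp only [hxN]; rw [if_neg (by omega)]
    have hfin : (Function.support xN).Finite := by
      apply Set.Finite.subset (Set.finite_Iio N)
      intro k hk
      simp only [Function.mem_support] at hk
      by_contra h
      exact hk (hx0 k (by simpa using h))
    have hTX : ∑' k, xN k ^ 2 = ∑ k ∈ range N, 1/((k:ℝ)+1) := by
      rw [tsum_eq_sum (s := range N) (fun k hk => by
        rw [hx0 k (by simpa using hk)]; ring)]
      apply Finset.sum_congr rfl
      intro k hk
      simp only [hxN]
      rw [if_pos (Finset.mem_range.mp hk), ww]
      rw [← Real.rpow_natCast (((k:ℝ)+1) ^ (-(1/2):ℝ)) 2,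
        ← Real.rpow_mul (by positivity : (0:ℝ) ≤ (k:ℝ)+1)]
      norm_num
      exact Real.rpow_neg_one _
    have hLHS : ∑' (n:ℕ), ∑' (k:ℕ), M n k * xN k * xN n
        = ∑ n ∈ range N, (∑ k ∈ range n, M n k * ww k) * ww n := by
      rw [tsum_reduce hx0 hx0]
      apply Finset.sum_congr rfl
      intro n hn
      have hnN : n < N := Finset.mem_range.mp hn
      have hsub : ∑ k ∈ range N, M n k * xN k * xN n = ∑ k ∈ range n, M n k * xN k * xN n := by
        symm
        apply Finset.sum_subset (Finset.range_subset_range.mpr hnN.le)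
        intro k _ hk
        rw [hM, if_neg (by simpa using hk)]; ring
      rw [hsub, Finset.sum_mul]
      apply Finset.sum_congr rfl
      intro k hk
      have hkn : k < n := Finset.mem_range.mp hk
      simp only [hxN]
      rw [if_pos (lt_trans hkn hnN), if_pos hnN]
    have := hb xN xN hxnn hxnn hfin hfin
    rw [hLHS, hTX] at this
    have hTX0 : (0:ℝ) ≤ ∑ k ∈ range N, 1/((k:ℝ)+1) :=
      Finset.sum_nonneg (fun k _ => by positivity)
    rw [mul_assoc, Real.mul_self_sqrt hTX0] at this
    calc ∑ n ∈ range N, (∑ k ∈ range n, M n k * ww k) * ww n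
        ≤ C * ∑ k ∈ range N, 1/((k:ℝ)+1) := this
      _ ≤ C * (1 + Real.log N) := by
          apply mul_le_mul_of_nonneg_left (harmonic_le N) hC.le
  rcases lt_or_eq_of_le hle with hlt | heq
  · -- Case p < 1/2
    set q : ℝ := p + 1/2 with hq
    set ε : ℝ := 1 - q with hε
    have hq0 : (0:ℝ) ≤ q := by rw [hq]; linarith
    have hq1 : q < 1 := by rw [hq]; linarith
    have hε0 : (0:ℝ) < ε := by rw [hε]; linarith
    have lower : ∀ N : ℕ,
        (p/2) * ((((N:ℝ)+1) ^ ε - 1)/ε) - p/2 ≤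
          ∑ n ∈ range N, (∑ k ∈ range n, M n k * ww k) * ww n := by
      intro N
      have hg' : ∀ n ∈ range N, (if n = 0 then (0:ℝ) else (p/2) * ((n:ℝ)+1) ^ (-q)) ≤
          (∑ k ∈ range n, M n k * ww k) * ww n := by
        intro n _
        rcases Nat.eq_zero_or_pos n with h0 | h0
        · subst h0; simp
        · rw [if_neg (by omega)]
          have hmem : (0:ℕ) ∈ range n := Finset.mem_range.mpr h0
          have hsingle : M n 0 * ww 0 ≤ ∑ k ∈ range n, M n k * ww k :=
            Finset.single_le_sum
              (fun k _ => mul_nonneg (Mnonneg hp hM n k) (ww_pos k).le) hmem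
          have hM0 : M n 0 = p * 2 ^ (p-1) * ((n:ℝ)+1) ^ (-p) := by
            rw [Mentry hp hM h0]
            norm_num
          have hww0 : ww 0 = 1 := by
            rw [ww]; norm_num [Real.one_rpow]
          have h2p : (1:ℝ)/2 ≤ 2 ^ (p-1) := by
            have := Real.rpow_le_rpow_of_exponent_le (x := 2) (by norm_num)
              (show (-1:ℝ) ≤ p - 1 by linarith)
            rw [Real.rpow_neg_one] at this
            linarith [this]
          have hnp : (0:ℝ) < ((n:ℝ)+1) ^ (-p) := Real.rpow_pos_of_pos (by positivity) _
          have hcollapse : ((n:ℝ)+1) ^ (-p) * ((n:ℝ)+1) ^ (-(1/2):ℝ) = ((n:ℝ)+1) ^ (-q) := by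
            rw [← Real.rpow_add (by positivity : (0:ℝ) < (n:ℝ)+1)]
            congr 1; rw [hq]; ring
          calc (p/2) * ((n:ℝ)+1) ^ (-q)
              = p * (1/2) * (((n:ℝ)+1) ^ (-p) * ((n:ℝ)+1) ^ (-(1/2):ℝ)) := by
                rw [hcollapse]; ring
            _ ≤ p * 2 ^ (p-1) * (((n:ℝ)+1) ^ (-p) * ((n:ℝ)+1) ^ (-(1/2):ℝ)) := by
                apply mul_le_mul_of_nonneg_right _ (by positivity)
                exact mul_le_mul_of_nonneg_left (by linarith) hp.le
            _ = (M n 0 * ww 0) * ww n := by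
                rw [hM0, hww0, ww]; ring
            _ ≤ (∑ k ∈ range n, M n k * ww k) * ww n := by
                apply mul_le_mul_of_nonneg_right _ (ww_pos n).le
                simpa [hww0] using hsingle
      have hsum1 : ∑ n ∈ range N, (if n = 0 then (0:ℝ) else (p/2) * ((n:ℝ)+1) ^ (-q))
          ≤ ∑ n ∈ range N, (∑ k ∈ range n, M n k * ww k) * ww n :=
        Finset.sum_le_sum hg'
      have hsum2 : (p/2) * (∑ n ∈ range N, ((n:ℝ)+1) ^ (-q)) - p/2 ≤
          ∑ n ∈ range N, (if n = 0 then (0:ℝ) else (p/2) * ((n:ℝ)+1) ^ (-q)) := by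
        have e1 : ∀ n ∈ range N, (p/2) * ((n:ℝ)+1) ^ (-q)
            - (if n = 0 then (p/2) * ((n:ℝ)+1) ^ (-q) else 0)
            = (if n = 0 then (0:ℝ) else (p/2) * ((n:ℝ)+1) ^ (-q)) := by
          intro n _; split <;> ring
        rw [← Finset.sum_congr rfl e1, Finset.sum_sub_distrib, ← Finset.mul_sum]
        have e2 : ∑ n ∈ range N, (if n = 0 then (p/2) * ((n:ℝ)+1) ^ (-q) else 0) ≤ p/2 := by
          rw [Finset.sum_ite_eq' (range N) 0 (fun n => (p/2) * ((n:ℝ)+1) ^ (-q))]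
          split
          · norm_num [Real.one_rpow]
          · positivity
        linarith
      have hT3 := T3 hq0 hq1 N
      have : (p/2) * ((((N:ℝ)+1) ^ (1-q) - 1)/(1-q)) ≤
          (p/2) * (∑ n ∈ range N, ((n:ℝ)+1) ^ (-q)) :=
        mul_le_mul_of_nonneg_left hT3 (by linarith)
      rw [← hε] at this
      linarith
    -- contradiction via quadratic growth
    have master : ∀ N : ℕ, 1 ≤ N →
        (p/(2*ε)) * (((N:ℝ)) ^ (ε/2)) ^ 2 - (2*C/ε) * ((N:ℝ)) ^ (ε/2)
          - (p/(2*ε) + p/2 + C) ≤ 0 := by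
      intro N hN1
      have hN0 : (0:ℝ) < (N:ℝ) := by exact_mod_cast hN1
      set u : ℝ := ((N:ℝ)) ^ (ε/2) with hu
      have hu0 : 0 < u := Real.rpow_pos_of_pos hN0 _
      have hu2 : u ^ 2 = ((N:ℝ)) ^ ε := by
        rw [hu, ← Real.rpow_natCast (((N:ℝ)) ^ (ε/2)) 2, ← Real.rpow_mul hN0.le]
        congr 1; push_cast; ring
      have hmono : ((N:ℝ)) ^ ε ≤ ((N:ℝ)+1) ^ ε :=
        Real.rpow_le_rpow hN0.le (by linarith) hε0.le
      have hlog : Real.log N ≤ (2/ε) * u := by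
        have h1 : Real.log (((N:ℝ)) ^ (ε/2)) = (ε/2) * Real.log N := Real.log_rpow hN0 _
        have h2 : Real.log (((N:ℝ)) ^ (ε/2)) ≤ u := by
          have := Real.log_le_sub_one_of_pos hu0
          rw [hu] at this ⊢
          linarith
        rw [h1] at h2
        rw [div_mul_eq_mul_div, le_div_iff₀ hε0]
        nlinarith
      have hkey := key N
      have hlow := lower N
      have e : (p/2) * ((u^2 - 1)/ε) = (p/(2*ε)) * u^2 - p/(2*ε) := by
        field_simp
      have hC2 : C * (1 + Real.log N) ≤ C + (2*C/ε) * u := by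
        have h' : C * Real.log N ≤ 2*C/ε*u := by
          calc C * Real.log N ≤ C * (2/ε*u) := mul_le_mul_of_nonneg_left hlog hC.le
            _ = 2*C/ε*u := by ring
        nlinarith [h']
      have hchain : (p/2) * ((u^2 - 1)/ε) - p/2 ≤ C + (2*C/ε) * u := by
        have hstep : (p/2) * ((u^2 - 1)/ε) ≤ (p/2) * ((((N:ℝ)+1) ^ ε - 1)/ε) := by
          apply mul_le_mul_of_nonneg_left _ (by linarith : (0:ℝ) ≤ p/2)
          apply (div_le_div_iff_of_pos_right hε0).mpr
          rw [hu2]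
          linarith [hmono]
        linarith
      rw [e] at hchain
      linarith
    have hquadpos :=
      (quad_tendsto (show (0:ℝ) < p/(2*ε) by positivity) (2*C/ε)
        (p/(2*ε) + p/2 + C)).eventually_gt_atTop 0
    have hu : Tendsto (fun N : ℕ => ((N:ℝ)) ^ (ε/2)) atTop atTop :=
      (tendsto_rpow_atTop (by positivity)).comp tendsto_natCast_atTop_atTop
    obtain ⟨N, hN⟩ := ((hu.eventually hquadpos).and (eventually_ge_atTop 1)).exists
    exact absurd (master N hN.2) (not_le.mpr hN.1)
  · -- Case p = 1/2
    subst heq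
    have lower : ∀ N : ℕ,
        (1/4) * (Real.log ((N:ℝ)+1))^2 - (Real.log 2 / 2) * (1 + Real.log N) ≤
          ∑ n ∈ range N, (∑ k ∈ range n, M n k * ww k) * ww n := by
      intro N
      have hterm : ∀ n ∈ range N,
          (1/2) * (1/((n:ℝ)+1)) * (Real.log ((n:ℝ)+2) - Real.log 2) ≤
            (∑ k ∈ range n, M n k * ww k) * ww n := by
        intro n _
        have hn1 : (0:ℝ) < (n:ℝ)+1 := by positivity
        have hinner : (1/2) * ((n:ℝ)+1) ^ (-(1/2):ℝ) * (Real.log ((n:ℝ)+2) - Real.log 2) ≤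
            ∑ k ∈ range n, M n k * ww k := by
          have hbk : ∀ k ∈ range n,
              ((1/2) * ((n:ℝ)+1) ^ (-(1/2):ℝ)) * (1/((k:ℝ)+2)) ≤ M n k * ww k := by
            intro k hk
            have hkn : k < n := Finset.mem_range.mp hk
            have hk2 : (0:ℝ) < (k:ℝ)+2 := by positivity
            have hk1 : (0:ℝ) < (k:ℝ)+1 := by positivity
            rw [Mentry (by norm_num) hM hkn, ww]
            rw [show (1/2:ℝ) - 1 = -(1/2) from by norm_num]
            have hkk : ((k:ℝ)+2) ^ (-(1/2):ℝ) ≤ ((k:ℝ)+1) ^ (-(1/2):ℝ) :=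
              Real.rpow_le_rpow_of_nonpos hk1 (by linarith) (by norm_num)
            have hprod : 1/((k:ℝ)+2) = ((k:ℝ)+2) ^ (-(1/2):ℝ) * ((k:ℝ)+2) ^ (-(1/2):ℝ) := by
              rw [← Real.rpow_add hk2]
              norm_num
              rw [Real.rpow_neg_one]
            rw [hprod]
            have hnn : (0:ℝ) ≤ (1/2) * ((n:ℝ)+1) ^ (-(1/2):ℝ) * ((k:ℝ)+2) ^ (-(1/2):ℝ) := by
              have := Real.rpow_nonneg hn1.le (-(1/2):ℝ)
              have := Real.rpow_nonneg hk2.le (-(1/2):ℝ)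
              positivity
            calc (1/2) * ((n:ℝ)+1) ^ (-(1/2):ℝ) *
                  (((k:ℝ)+2) ^ (-(1/2):ℝ) * ((k:ℝ)+2) ^ (-(1/2):ℝ))
                = ((1/2) * ((n:ℝ)+1) ^ (-(1/2):ℝ) * ((k:ℝ)+2) ^ (-(1/2):ℝ))
                    * ((k:ℝ)+2) ^ (-(1/2):ℝ) := by ring
              _ ≤ ((1/2) * ((n:ℝ)+1) ^ (-(1/2):ℝ) * ((k:ℝ)+2) ^ (-(1/2):ℝ))
                    * ((k:ℝ)+1) ^ (-(1/2):ℝ) := mul_le_mul_of_nonneg_left hkk hnn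
              _ = 1/2 * ((k:ℝ)+2) ^ (-(1/2):ℝ) * ((n:ℝ)+1) ^ (-(1/2):ℝ)
                    * ((k:ℝ)+1) ^ (-(1/2):ℝ) := by ring
          calc (1/2) * ((n:ℝ)+1) ^ (-(1/2):ℝ) * (Real.log ((n:ℝ)+2) - Real.log 2)
              ≤ (1/2) * ((n:ℝ)+1) ^ (-(1/2):ℝ) * ∑ k ∈ range n, 1/((k:ℝ)+2) := by
                apply mul_le_mul_of_nonneg_left (sum_inv_ge_log n)
                have := Real.rpow_nonneg hn1.le (-(1/2):ℝ)
                positivity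
            _ = ∑ k ∈ range n, ((1/2) * ((n:ℝ)+1) ^ (-(1/2):ℝ)) * (1/((k:ℝ)+2)) := by
                rw [← Finset.mul_sum]
            _ ≤ ∑ k ∈ range n, M n k * ww k := Finset.sum_le_sum hbk
        have hcollapse : ((n:ℝ)+1) ^ (-(1/2):ℝ) * ((n:ℝ)+1) ^ (-(1/2):ℝ) = 1/((n:ℝ)+1) := by
          rw [← Real.rpow_add hn1]
          norm_num
          rw [Real.rpow_neg_one]
        calc (1/2) * (1/((n:ℝ)+1)) * (Real.log ((n:ℝ)+2) - Real.log 2)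
            = ((1/2) * ((n:ℝ)+1) ^ (-(1/2):ℝ) * (Real.log ((n:ℝ)+2) - Real.log 2))
                * ((n:ℝ)+1) ^ (-(1/2):ℝ) := by rw [← hcollapse]; ring
          _ ≤ (∑ k ∈ range n, M n k * ww k) * ((n:ℝ)+1) ^ (-(1/2):ℝ) :=
              mul_le_mul_of_nonneg_right hinner (Real.rpow_nonneg hn1.le _)
          _ = (∑ k ∈ range n, M n k * ww k) * ww n := by rw [ww]
      have hsum := Finset.sum_le_sum hterm
      have e1 : ∀ n ∈ range N, (1/2) * (1/((n:ℝ)+1)) * (Real.log ((n:ℝ)+2) - Real.log 2)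
          = (1/2) * (Real.log ((n:ℝ)+2)/((n:ℝ)+1)) - (Real.log 2/2) * (1/((n:ℝ)+1)) := by
        intro n _; ring
      rw [Finset.sum_congr rfl e1, Finset.sum_sub_distrib, ← Finset.mul_sum,
        ← Finset.mul_sum] at hsum
      have hlogsq := logsq_lower N
      have hharm := harmonic_le N
      have hlog2 : (0:ℝ) ≤ Real.log 2 := Real.log_nonneg (by norm_num)
      nlinarith [hsum, hlogsq, hharm]
    have master : ∀ N : ℕ, 1 ≤ N →
        (1/4) * (Real.log ((N:ℝ)+1))^2 - (C + Real.log 2/2) * (Real.log ((N:ℝ)+1))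
          - (C + Real.log 2/2) ≤ 0 := by
      intro N hN1
      have hN0 : (0:ℝ) < (N:ℝ) := by exact_mod_cast hN1
      have hlogmono : Real.log N ≤ Real.log ((N:ℝ)+1) :=
        Real.log_le_log hN0 (by linarith)
      have hlogN0 : (0:ℝ) ≤ Real.log N := Real.log_nonneg (by exact_mod_cast hN1)
      have hkey := key N
      have hlow := lower N
      have hBnn : (0:ℝ) ≤ C + Real.log 2/2 := by
        have := Real.log_nonneg (show (1:ℝ) ≤ 2 by norm_num)
        linarith
      nlinarith [hkey, hlow, hlogmono, hlogN0, hBnn]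
    have hquadpos :=
      (quad_tendsto (show (0:ℝ) < 1/4 by norm_num) (C + Real.log 2/2)
        (C + Real.log 2/2)).eventually_gt_atTop 0
    have hL : Tendsto (fun N : ℕ => Real.log ((N:ℝ)+1)) atTop atTop :=
      Real.tendsto_log_atTop.comp
        (tendsto_atTop_add_const_right atTop 1 tendsto_natCast_atTop_atTop)
    obtain ⟨N, hN⟩ := ((hL.eventually hquadpos).and (eventually_ge_atTop 1)).exists
    have := master N hN.2
    have hpos := hN.1
    nlinarith [this, hpos]


/-- **Adams–McGuire.** The matrix `M (n,k) = (p/(k+2)) * ((k+2)/(n+1))^p` for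
`n > k` (and `0` otherwise) is bounded on `ℓ²` if and only if `p > 1/2`. -/
theorem statement1 (p : ℝ) (hp : 0 < p)
    (M : ℕ → ℕ → ℝ)
    (hM : ∀ n k : ℕ, M n k =
      if k < n then (p / ((k : ℝ) + 2)) * (((k : ℝ) + 2) / ((n : ℝ) + 1)) ^ p else 0) :
    (∃ C > (0 : ℝ), ∀ x y : ℕ → ℝ, (∀ k, 0 ≤ x k) → (∀ n, 0 ≤ y n) →
        (Function.support x).Finite → (Function.support y).Finite →
        ∑' (n : ℕ), ∑' (k : ℕ), M n k * x k * y n ≤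
          C * Real.sqrt (∑' k, x k ^ 2) * Real.sqrt (∑' n, y n ^ 2)) ↔
      1 / 2 < p := by
  exact ⟨fun h => reverse hp hM h, fun h => forward hp h hM⟩
end

section
/- Let J = 2, z_1 = 1, z_2 = −1, so φ(z) = (1−z)(1+z) = 1 − z², and let a_n = 1 − 1/(n+2)² for n ≥ 0, so that f_n(z) = z^n(1 − a_n² z²). Then the function φ(z) = 1 − z² does not belong to H(K): there is no square-summable sequence (α_n)_{n≥0} with 1 − z² = Σ_{n≥0} α_n f_n(z) for all z in the open unit disk. In particular the containment φ(z)·H²(𝔻) ⊆ H(K) fails for this choice of weights. -/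
open Filter Topology

/-- If a bounded sequence of coefficients represents `F` pointwise on the unit disk, then
`F` has the corresponding formal power series at `0`. -/
lemma hasFPowerSeriesAt_of_hasSum (c : ℕ → ℂ) (C : ℝ) (hb : ∀ n, ‖c n‖ ≤ C)
    (F : ℂ → ℂ) (h : ∀ x : ℂ, ‖x‖ < 1 → HasSum (fun n => c n * x ^ n) (F x)) :
    HasFPowerSeriesAt F (FormalMultilinearSeries.ofScalars ℂ c) 0 := by
  set p := FormalMultilinearSeries.ofScalars ℂ c with hp
  have hrad : (1 : ENNReal) ≤ p.radius := by
    apply p.le_radius_of_bound C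
    intro n
    simp only [hp, FormalMultilinearSeries.ofScalars_norm, NNReal.coe_one, one_pow, mul_one]
    exact hb n
  have hpos : 0 < p.radius := lt_of_lt_of_le one_pos hrad
  have hat : HasFPowerSeriesAt p.sum p 0 := (p.hasFPowerSeriesOnBall hpos).hasFPowerSeriesAt
  refine hat.congr ?_
  filter_upwards [Metric.ball_mem_nhds (0 : ℂ) one_pos] with x hx
  have hx' : ‖x‖ < 1 := by simpa using hx
  have ht := (h x hx').tsum_eq
  rw [FormalMultilinearSeries.sum]
  simp only [hp, FormalMultilinearSeries.ofScalars_apply_eq, smul_eq_mul]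
  exact ht

lemma key_ineq (k : ℕ) :
    1/2 + 1/(2*(k:ℝ)+4) ≤ (1/2 + 1/(2*(k:ℝ)+2)) * (1 - 1/(2*(k:ℝ)+4)^2)^2 := by
  have hk : (0:ℝ) ≤ k := Nat.cast_nonneg k
  have h1 : (0:ℝ) < 2*k+2 := by linarith
  have h2 : (0:ℝ) < 2*k+4 := by linarith
  rw [← sub_nonneg]
  have he : (1/2 + 1/(2*(k:ℝ)+2)) * (1 - 1/(2*(k:ℝ)+4)^2)^2 - (1/2 + 1/(2*(k:ℝ)+4))
      = (32*(k:ℝ)^4 + 256*(k:ℝ)^3 + 772*(k:ℝ)^2 + 1040*(k:ℝ) + 528)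
        / ((2*(k:ℝ)+2) * (2*(k:ℝ)+4)^5 * 2) := by
    field_simp
    ring
  rw [he]
  positivity

/-- **Example.** For `φ(z) = 1 - z²` and `a n = 1 - 1/(n+2)²`, the function
`φ(z) = 1 - z²` does not belong to `H(K)`; in particular `φ · H²(𝔻) ⊆ H(K)` fails. -/
theorem statement7
    (a : ℕ → ℂ) (ha : ∀ n, a n = 1 - 1 / ((n : ℂ) + 2) ^ 2)
    (f : ℕ → ℂ → ℂ) (hf : ∀ n x, f n x = x ^ n * (1 - (a n * x) ^ 2)) :
    ¬ ∃ α : ℕ → ℂ, (Summable fun n => ‖α n‖ ^ 2) ∧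
        ∀ x : ℂ, ‖x‖ < 1 → HasSum (fun n => α n * f n x) (1 - x ^ 2) := by
  rintro ⟨α, hα, hsum⟩
  -- the weights `a n` are real numbers in `[0,1]`
  have haR : ∀ n, a n = ((1 - 1/((n:ℝ)+2)^2 : ℝ) : ℂ) := by
    intro n; rw [ha n]; push_cast; ring
  have hr0 : ∀ n : ℕ, (0:ℝ) ≤ 1 - 1/((n:ℝ)+2)^2 := by
    intro n
    have h2 : (0:ℝ) < ((n:ℝ)+2)^2 := by positivity
    have h4 : (4:ℝ) ≤ ((n:ℝ)+2)^2 := by nlinarith [Nat.cast_nonneg (α := ℝ) n]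
    have : 1/((n:ℝ)+2)^2 ≤ 1/4 := by
      apply div_le_div_of_nonneg_left (by norm_num) (by norm_num) h4
    linarith
  have hnorm_a : ∀ n, ‖a n‖ = 1 - 1/((n:ℝ)+2)^2 := by
    intro n
    rw [haR n, Complex.norm_real, Real.norm_eq_abs, abs_of_nonneg (hr0 n)]
  have ha_le1 : ∀ n, ‖a n‖ ≤ 1 := by
    intro n
    rw [hnorm_a n]
    have : (0:ℝ) ≤ 1/((n:ℝ)+2)^2 := by positivity
    linarith
  -- a uniform bound on `α`
  obtain ⟨C, hC0, hC⟩ : ∃ C : ℝ, 0 ≤ C ∧ ∀ n, ‖α n‖ ≤ C := by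
    have h1 : Tendsto (fun n => ‖α n‖ ^ 2) atTop (𝓝 0) := hα.tendsto_atTop_zero
    obtain ⟨C2, hC2⟩ := h1.bddAbove_range
    rw [mem_upperBounds] at *
    refine ⟨max 1 C2, le_trans zero_le_one (le_max_left _ _), fun n => ?_⟩
    rcases le_or_gt (‖α n‖) 1 with h | h
    · exact h.trans (le_max_left _ _)
    · have hn : ‖α n‖ ≤ ‖α n‖ ^ 2 := by nlinarith
      exact hn.trans ((hC2 _ ⟨n, rfl⟩).trans (le_max_right _ _))
  -- the combined coefficient sequence
  set β : ℕ → ℂ := fun n => α n - (if 2 ≤ n then α (n-2) * (a (n-2))^2 else 0) with hβ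
  set d : ℕ → ℂ := fun n => if n = 0 then 1 else if n = 2 then -1 else 0 with hd
  have hβb : ∀ n, ‖β n‖ ≤ C + C := by
    intro n
    have h1 : ‖(if 2 ≤ n then α (n-2) * (a (n-2))^2 else 0 : ℂ)‖ ≤ C := by
      split_ifs with h
      · rw [norm_mul, norm_pow]
        have h2 : ‖a (n-2)‖^2 ≤ 1 := by nlinarith [ha_le1 (n-2), norm_nonneg (a (n-2))]
        calc ‖α (n-2)‖ * ‖a (n-2)‖^2 ≤ ‖α (n-2)‖ * 1 :=
              mul_le_mul_of_nonneg_left h2 (norm_nonneg _)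
          _ = ‖α (n-2)‖ := mul_one _
          _ ≤ C := hC _
      · simpa using hC0
    calc ‖β n‖ ≤ ‖α n‖ + ‖(if 2 ≤ n then α (n-2) * (a (n-2))^2 else 0 : ℂ)‖ :=
          norm_sub_le _ _
      _ ≤ C + C := add_le_add (hC n) h1
  -- β represents 1 - x² on the unit disk
  have hβsum : ∀ x : ℂ, ‖x‖ < 1 → HasSum (fun n => β n * x ^ n) (1 - x ^ 2) := by
    intro x hx
    have hgeo : Summable (fun n : ℕ => C * ‖x‖ ^ n) :=
      (summable_geometric_of_lt_one (norm_nonneg x) hx).mul_left C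
    have hsum1 : Summable (fun n => α n * x ^ n) := by
      apply Summable.of_norm_bounded hgeo
      intro n
      rw [norm_mul, norm_pow]
      exact mul_le_mul_of_nonneg_right (hC n) (by positivity)
    have hsum2 : Summable (fun n => α n * (a n)^2 * x ^ (n+2)) := by
      apply Summable.of_norm_bounded hgeo
      intro n
      rw [norm_mul, norm_mul, norm_pow, norm_pow]
      have h1 : ‖α n‖ * ‖a n‖^2 ≤ C := by
        have hsq : ‖a n‖^2 ≤ 1 := by nlinarith [ha_le1 n, norm_nonneg (a n)]
        calc ‖α n‖ * ‖a n‖^2 ≤ ‖α n‖ * 1 := mul_le_mul_of_nonneg_left hsq (norm_nonneg _)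
          _ = ‖α n‖ := mul_one _
          _ ≤ C := hC _
      have h2 : ‖x‖ ^ (n+2) ≤ ‖x‖ ^ n :=
        pow_le_pow_of_le_one (norm_nonneg x) hx.le (by omega)
      have := norm_nonneg x
      nlinarith [pow_nonneg (norm_nonneg x) (n+2), pow_nonneg (norm_nonneg x) n,
        norm_nonneg (α n), norm_nonneg (a n)]
    obtain ⟨A, hA⟩ := hsum1
    obtain ⟨B, hB⟩ := hsum2
    have hAB : HasSum (fun n => α n * x ^ n - α n * (a n)^2 * x ^ (n+2)) (A - B) := hA.sub hB
    have hfe : (fun n => α n * f n x) = fun n => α n * x ^ n - α n * (a n)^2 * x ^ (n+2) := by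
      funext n; rw [hf]; ring
    have hval : A - B = 1 - x ^ 2 := hAB.unique (hfe ▸ hsum x hx)
    -- reindex the second sum
    set γ : ℕ → ℂ := fun n => if 2 ≤ n then α (n-2) * (a (n-2))^2 * x ^ n else 0 with hγ
    have hγB : HasSum γ B := by
      have hinj : Function.Injective (fun n : ℕ => n + 2) := fun a b h => by
        simpa using h
      have hvanish : ∀ m ∉ Set.range (fun n : ℕ => n + 2), γ m = 0 := by
        intro m hm
        have h2 : ¬ 2 ≤ m := by
          intro h
          exact hm ⟨m - 2, show m - 2 + 2 = m by omega⟩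
        simp [hγ, h2]
      have hcomp : (γ ∘ fun n : ℕ => n + 2) = fun n => α n * (a n)^2 * x ^ (n+2) := by
        funext n
        simp [hγ, Function.comp, Nat.add_sub_cancel]
      rw [← hinj.hasSum_iff hvanish, hcomp]
      exact hB
    have : HasSum (fun n => β n * x ^ n) (A - B) := by
      have heq : (fun n => β n * x ^ n) = fun n => α n * x ^ n - γ n := by
        funext n
        by_cases h : 2 ≤ n <;> simp [hβ, hγ, h] <;> ring
      rw [heq]
      exact hA.sub hγB
    rwa [hval] at this
  -- d represents 1 - x² on the unit disk
  have hdsum : ∀ x : ℂ, ‖x‖ < 1 → HasSum (fun n => d n * x ^ n) (1 - x ^ 2) := by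
    intro x hx
    have hvanish : ∀ b ∉ ({0, 2} : Finset ℕ), d b * x ^ b = 0 := by
      intro b hb
      simp only [Finset.mem_insert, Finset.mem_singleton] at hb
      push_neg at hb
      simp [hd, hb.1, hb.2]
    have h0 : HasSum (fun n => d n * x ^ n) _ := hasSum_sum_of_ne_finset_zero hvanish
    have : ∑ b ∈ ({0, 2} : Finset ℕ), d b * x ^ b = 1 - x ^ 2 := by
      rw [Finset.sum_pair (by norm_num : (0:ℕ) ≠ 2)]
      simp [hd]
      ring
    rwa [this] at h0
  have hdb : ∀ n, ‖d n‖ ≤ 1 := by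
    intro n
    rcases n with _ | _ | _ | n <;> simp [hd]
  -- uniqueness of power series coefficients
  have hp1 := hasFPowerSeriesAt_of_hasSum β (C + C) hβb _ hβsum
  have hp2 := hasFPowerSeriesAt_of_hasSum d 1 hdb _ hdsum
  have hβd : β = d := by
    have := hp1.eq_formalMultilinearSeries hp2
    exact FormalMultilinearSeries.ofScalars_series_injective ℂ ℂ this
  -- extract the recursion
  have hcoef : ∀ n, β n = d n := fun n => congrFun hβd n
  have h0 : α 0 = 1 := by
    have := hcoef 0
    simpa [hβ, hd] using this
  have h2 : α 2 = (a 0)^2 - 1 := by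
    have := hcoef 2
    simp [hβ, hd, h0] at this
    linear_combination this
  have ha0 : a 0 = 3/4 := by
    rw [ha 0]; norm_num
  have hα2 : α 2 = -7/16 := by
    rw [h2, ha0]; norm_num
  have hrec : ∀ k : ℕ, α (2*k+4) = α (2*k+2) * (a (2*k+2))^2 := by
    intro k
    have := hcoef (2*k+4)
    have hne0 : 2*k+4 ≠ 0 := by omega
    have hne2 : 2*k+4 ≠ 2 := by omega
    have hle : 2 ≤ 2*k+4 := by omega
    have hsub : 2*k+4-2 = 2*k+2 := by omega
    simp only [hβ, hd, hne0, hne2, if_false, hle, if_true, hsub] at this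
    linear_combination this
  -- the inductive lower bound
  have main : ∀ k : ℕ, 7/16 * (1/2 + 1/(2*(k:ℝ)+2)) ≤ ‖α (2*k+2)‖ := by
    intro k
    induction k with
    | zero =>
      have hn : ‖α (2*0+2)‖ = 7/16 := by
        rw [show (2*0+2 : ℕ) = 2 from rfl, hα2,
          show ((-7/16 : ℂ)) = ((-7/16 : ℝ) : ℂ) by norm_num, Complex.norm_real]
        norm_num
      rw [hn]
      norm_num
    | succ k ih =>
      push_cast
      have hidx : 2*(k+1)+2 = 2*k+4 := by omega
      rw [hidx, hrec k, norm_mul, norm_pow, hnorm_a (2*k+2)]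
      have hc1 : ((2*k+2 : ℕ) : ℝ) + 2 = 2*(k:ℝ)+4 := by push_cast; ring
      rw [hc1, show 2*((k:ℝ)+1)+2 = 2*(k:ℝ)+4 by ring]
      calc 7/16 * (1/2 + 1/(2*(k:ℝ)+4))
          ≤ 7/16 * ((1/2 + 1/(2*(k:ℝ)+2)) * (1 - 1/(2*(k:ℝ)+4)^2)^2) :=
            mul_le_mul_of_nonneg_left (key_ineq k) (by norm_num)
        _ = (7/16 * (1/2 + 1/(2*(k:ℝ)+2))) * (1 - 1/(2*(k:ℝ)+4)^2)^2 := by ring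
        _ ≤ ‖α (2*k+2)‖ * (1 - 1/(2*(k:ℝ)+4)^2)^2 :=
            mul_le_mul_of_nonneg_right ih (sq_nonneg _)
  -- conclude: contradiction with square-summability
  have htend : Tendsto (fun k : ℕ => ‖α (2*k+2)‖ ^ 2) atTop (𝓝 0) := by
    have h1 : Tendsto (fun n => ‖α n‖ ^ 2) atTop (𝓝 0) := hα.tendsto_atTop_zero
    exact h1.comp (tendsto_atTop_atTop.mpr fun b => ⟨b, fun a ha => by omega⟩)
  have hge : ((7:ℝ)/32)^2 ≤ 0 := by
    apply ge_of_tendsto' htend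
    intro k
    have h1 : (7:ℝ)/32 ≤ ‖α (2*k+2)‖ := by
      refine le_trans ?_ (main k)
      have : (0:ℝ) < 1/(2*(k:ℝ)+2) := by positivity
      linarith
    have h2 : (0:ℝ) ≤ 7/32 := by norm_num
    nlinarith
  norm_num at hge
end

section
/- Assume lim_{n→∞} n(1 − a_n) = p for a real number p > 0. Then the natural domain of H(K) is the open unit disk together with the points z_1, …, z_J: precisely, { z ∈ ℂ : Σ_{n≥0} |f_n(z)|² < ∞ } = 𝔻 ∪ {z_1, z_2, …, z_J }. -/
open Filter

/-- **natural domain.** If `n(1 - a n) → p` with `p > 0`, then the natural domain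
`{x : Σ_n |f n x|² < ∞}` of `H(K)` equals `𝔻 ∪ {z 1, …, z J}`. -/
theorem statement8
    (J : ℕ) (hJ : 1 ≤ J)
    (z : Fin J → ℂ) (hz : ∀ j, ‖z j‖ = 1) (hzinj : Function.Injective z)
    (φ : ℂ → ℂ) (hφ : ∀ x, φ x = ∏ j, (1 - (starRingEnd ℂ) (z j) * x))
    (a : ℕ → ℂ) (ha : ∀ n, a n ≠ 1) (halim : Filter.Tendsto a Filter.atTop (nhds 1))
    (f : ℕ → ℂ → ℂ) (hf : ∀ n x, f n x = x ^ n * φ (a n * x))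
    (p : ℝ) (hp : 0 < p)
    (hlim : Filter.Tendsto (fun n : ℕ => (n : ℂ) * (1 - a n)) Filter.atTop (nhds (p : ℂ))) :
    {x : ℂ | Summable fun n => ‖f n x‖ ^ 2} = Metric.ball (0 : ℂ) 1 ∪ Set.range z := by
  have hcphi : Continuous φ := by
    have h : φ = fun x => ∏ j, (1 - (starRingEnd ℂ) (z j) * x) := funext hφ
    rw [h]
    exact continuous_finset_prod _ fun j _ =>
      continuous_const.sub (continuous_const.mul continuous_id)
  have hzz : ∀ j, (starRingEnd ℂ) (z j) * z j = 1 := by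
    intro j; rw [Complex.conj_mul', hz j]; norm_num
  -- for any x, φ (a n * x) → φ x
  have htphi : ∀ x : ℂ, Tendsto (fun n => φ (a n * x)) atTop (nhds (φ x)) := by
    intro x
    have h1 : Tendsto (fun n => a n * x) atTop (nhds x) := by
      have := halim.mul_const x
      simpa using this
    exact (hcphi.tendsto x).comp h1
  ext x
  simp only [Set.mem_setOf_eq, Set.mem_union, Metric.mem_ball, dist_zero_right, Set.mem_range]
  constructor
  · intro hsum
    by_contra hcon
    push_neg at hcon
    obtain ⟨hx1, hx2⟩ := hcon
    have hxnorm : 1 ≤ ‖x‖ := hx1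
    have hφx : φ x ≠ 0 := by
      rw [hφ]
      refine Finset.prod_ne_zero_iff.mpr fun j _ => ?_
      intro h0
      have hcx : (starRingEnd ℂ) (z j) * x = 1 := by
        have := sub_eq_zero.mp h0; exact this.symm
      apply hx2 j
      have hne : (starRingEnd ℂ) (z j) ≠ 0 := by
        intro h; rw [h, zero_mul] at hcx; exact one_ne_zero hcx.symm
      have : (starRingEnd ℂ) (z j) * z j = (starRingEnd ℂ) (z j) * x := by
        rw [hzz j, hcx]
      exact (mul_left_cancel₀ hne this)
    have h0 : Tendsto (fun n => ‖f n x‖ ^ 2) atTop (nhds 0) := hsum.tendsto_atTop_zero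
    have ht : Tendsto (fun n => ‖φ (a n * x)‖ ^ 2) atTop (nhds (‖φ x‖ ^ 2)) :=
      ((htphi x).norm).pow 2
    have hle : ∀ n, ‖φ (a n * x)‖ ^ 2 ≤ ‖f n x‖ ^ 2 := by
      intro n
      rw [hf, norm_mul, norm_pow]
      have h1 : 1 ≤ ‖x‖ ^ n := one_le_pow₀ hxnorm
      have h2 : ‖φ (a n * x)‖ ≤ ‖x‖ ^ n * ‖φ (a n * x)‖ :=
        le_mul_of_one_le_left (norm_nonneg _) h1
      exact pow_le_pow_left₀ (norm_nonneg _) h2 2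
    have hsq : Tendsto (fun n => ‖φ (a n * x)‖ ^ 2) atTop (nhds 0) := by
      refine tendsto_of_tendsto_of_tendsto_of_le_of_le tendsto_const_nhds h0
        (fun n => by positivity) hle
    have : ‖φ x‖ ^ 2 = 0 := tendsto_nhds_unique ht hsq
    exact hφx (by simpa [pow_eq_zero_iff] using this)
  · rintro (hx | ⟨j, rfl⟩)
    · -- ‖x‖ < 1 : geometric comparison
      obtain ⟨C, hC⟩ := ((htphi x).norm.pow 2).bddAbove_range
      have hCb : ∀ n, ‖φ (a n * x)‖ ^ 2 ≤ C := fun n => hC (Set.mem_range_self n)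
      have hr : ‖x‖ ^ 2 < 1 := by nlinarith [norm_nonneg x]
      have hgs : Summable (fun n : ℕ => C * (‖x‖ ^ 2) ^ n) :=
        (summable_geometric_of_lt_one (by positivity) hr).mul_left C
      refine hgs.of_nonneg_of_le (fun n => by positivity) fun n => ?_
      rw [hf, norm_mul, norm_pow, mul_pow, ← pow_mul, mul_comm n 2, pow_mul]
      calc (‖x‖ ^ 2) ^ n * ‖φ (a n * x)‖ ^ 2 ≤ (‖x‖ ^ 2) ^ n * C :=
            mul_le_mul_of_nonneg_left (hCb n) (by positivity)
        _ = C * (‖x‖ ^ 2) ^ n := mul_comm _ _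
    · -- x = z j
      set w : ℕ → ℂ := fun n => ∏ k ∈ Finset.univ.erase j, (1 - (starRingEnd ℂ) (z k) * (a n * z j)) with hw
      have hfac : ∀ n, φ (a n * z j) = (1 - a n) * w n := by
        intro n
        rw [hφ, ← Finset.mul_prod_erase Finset.univ _ (Finset.mem_univ j)]
        congr 1
        rw [show (starRingEnd ℂ) (z j) * (a n * z j) = a n * ((starRingEnd ℂ) (z j) * z j) by ring,
          hzz j, mul_one]
      have hW : Tendsto (fun n => w n) atTop
          (nhds (∏ k ∈ Finset.univ.erase j, (1 - (starRingEnd ℂ) (z k) * z j))) := by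
        refine tendsto_finset_prod _ fun k _ => ?_
        have : Tendsto (fun n => a n * z j) atTop (nhds (z j)) := by
          simpa using halim.mul_const (z j)
        exact tendsto_const_nhds.sub (tendsto_const_nhds.mul this)
      set W : ℂ := ∏ k ∈ Finset.univ.erase j, (1 - (starRingEnd ℂ) (z k) * z j) with hWdef
      have hkey : Tendsto (fun n : ℕ => (n : ℝ) * ‖f n (z j)‖) atTop (nhds (p * ‖W‖)) := by
        have h1 : Tendsto (fun n : ℕ => ‖(n : ℂ) * (1 - a n)‖ * ‖w n‖) atTop
            (nhds (‖(p : ℂ)‖ * ‖W‖)) := hlim.norm.mul hW.norm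
        have h2 : ‖(p : ℂ)‖ = p := by
          rw [Complex.norm_real, Real.norm_eq_abs, abs_of_pos hp]
        rw [h2] at h1
        refine h1.congr fun n => ?_
        rw [hf, hfac, norm_mul, norm_mul, norm_pow, hz j, one_pow, one_mul, norm_mul,
          Complex.norm_natCast]
        ring
      have hkey2 : Tendsto (fun n : ℕ => ((n : ℝ) * ‖f n (z j)‖) ^ 2) atTop
          (nhds ((p * ‖W‖) ^ 2)) := hkey.pow 2
      -- eventual bound
      have hev : ∀ᶠ n : ℕ in atTop, ((n : ℝ) * ‖f n (z j)‖) ^ 2 ≤ (p * ‖W‖) ^ 2 + 1 := by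
        filter_upwards [hkey2.eventually (eventually_le_nhds (lt_add_one _))] with n hn
        exact hn
      have hbig : (fun n => ‖f n (z j)‖ ^ 2) =O[atTop] (fun n : ℕ => 1 / (n : ℝ) ^ 2) := by
        refine Asymptotics.IsBigO.of_bound ((p * ‖W‖) ^ 2 + 1) ?_
        filter_upwards [hev, eventually_ge_atTop 1] with n hn hn1
        have hnpos : (0 : ℝ) < (n : ℝ) := by exact_mod_cast hn1
        rw [Real.norm_eq_abs, Real.norm_eq_abs, abs_of_nonneg (by positivity),
          abs_of_nonneg (by positivity)]
        rw [mul_pow] at hn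
        rw [mul_one_div, le_div_iff₀ (by positivity)]
        linarith [hn]
      exact (summable_of_isBigO_nat (by simpa using Real.summable_one_div_nat_pow.mpr one_lt_two) hbig)
end

section
/- Assume lim_{n→∞} n(1 − a_n) = p for a real number p > 0 (so that Σ_n |f_n(z_j)|² < ∞ for each j and the sums below converge absolutely). Then the J×J matrix A whose (j,k) entry is K(z_k, z_j) = Σ_{n≥0} f_n(z_k)·conj(f_n(z_j)) is invertible. -/
open Filter Finset


/-- If `n(1 - a n) → p` with `p > 0`, then the `J × J` matrix with entries
`K(z k, z j) = ∑' n, f n (z k) * conj (f n (z j))` is invertible. -/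
theorem statement9
    (J : ℕ) (hJ : 1 ≤ J)
    (z : Fin J → ℂ) (hz : ∀ j, ‖z j‖ = 1) (hzinj : Function.Injective z)
    (φ : ℂ → ℂ) (hφ : ∀ x, φ x = ∏ j, (1 - (starRingEnd ℂ) (z j) * x))
    (a : ℕ → ℂ) (ha : ∀ n, a n ≠ 1) (halim : Filter.Tendsto a Filter.atTop (nhds 1))
    (f : ℕ → ℂ → ℂ) (hf : ∀ n x, f n x = x ^ n * φ (a n * x))
    (p : ℝ) (hp : 0 < p)
    (hlim : Filter.Tendsto (fun n : ℕ => (n : ℂ) * (1 - a n)) Filter.atTop (nhds (p : ℂ)))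
    (A : Matrix (Fin J) (Fin J) ℂ)
    (hA : ∀ j k : Fin J, A j k = ∑' n, f n (z k) * (starRingEnd ℂ) (f n (z j))) :
    IsUnit A := by
  classical
  set w : Fin J → ℂ := fun j => (starRingEnd ℂ) (z j) with hwdef
  -- basic facts
  have hw1 : ∀ j, w j * z j = 1 := by
    intro j
    have h1 : Complex.normSq (z j) = 1 := by
      rw [Complex.normSq_eq_norm_sq, hz]; norm_num
    rw [hwdef]; rw [mul_comm, Complex.mul_conj, h1]; norm_num
  have hzeq : ∀ j k, w j * z k = 1 → j = k := by
    intro j k h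
    apply hzinj
    have h2 := hw1 j
    have hwne : w j ≠ 0 := by
      intro h0
      rw [h0, zero_mul] at h2; exact one_ne_zero h2.symm
    exact (mul_left_cancel₀ hwne (h.trans h2.symm)).symm
  -- the product decomposition
  set P : Fin J → ℕ → ℂ := fun k n => ∏ j ∈ Finset.univ.erase k, (1 - w j * (a n * z k)) with hPdef
  have hfP : ∀ n k, f n (z k) = z k ^ n * ((1 - a n) * P k n) := by
    intro n k
    rw [hf, hφ]
    congr 1
    rw [← Finset.mul_prod_erase Finset.univ (fun j => (1 - w j * (a n * z k))) (Finset.mem_univ k)]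
    congr 1
    have : w k * (a n * z k) = a n * (w k * z k) := by ring
    rw [this, hw1, mul_one]
  set D : Fin J → ℂ := fun k => ∏ j ∈ Finset.univ.erase k, (1 - w j * z k) with hDdef
  have hD : ∀ k, D k ≠ 0 := by
    intro k
    rw [hDdef]
    apply Finset.prod_ne_zero_iff.mpr
    intro j hj
    rw [Finset.mem_erase] at hj
    intro h0
    have : w j * z k = 1 := by
      have := sub_eq_zero.mp h0; linear_combination -this
    exact hj.1 (hzeq j k this)
  have hPlim : ∀ k, Tendsto (P k) atTop (nhds (D k)) := by
    intro k
    have h1 : Tendsto (fun n => ∏ j ∈ Finset.univ.erase k, (1 - w j * (a n * z k))) atTop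
        (nhds (∏ j ∈ Finset.univ.erase k, (1 - w j * ((1:ℂ) * z k)))) := by
      apply tendsto_finset_prod
      intro j _
      exact Filter.Tendsto.const_sub _ (((halim.mul_const (z k)).const_mul (w j)))
    simpa using h1
  -- uniform bound on P
  have hCex : ∀ k, ∃ Ck : ℝ, ∀ n, ‖P k n‖ ≤ Ck := by
    intro k
    obtain ⟨Ck, hCk⟩ := (hPlim k).norm.bddAbove_range
    exact ⟨Ck, fun n => hCk (Set.mem_range_self n)⟩
  choose Ck hCk using hCex
  set C : ℝ := ∑ k, |Ck k| with hCdef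
  have hC0 : 0 ≤ C := Finset.sum_nonneg fun k _ => abs_nonneg _
  have hPC : ∀ k n, ‖P k n‖ ≤ C := by
    intro k n
    calc ‖P k n‖ ≤ Ck k := hCk k n
      _ ≤ |Ck k| := le_abs_self _
      _ ≤ C := Finset.single_le_sum (fun i _ => abs_nonneg (Ck i)) (Finset.mem_univ k)
  have hzkn : ∀ (k : Fin J) (n : ℕ), ‖z k ^ n‖ = 1 := by
    intro k n; rw [norm_pow, hz]; exact one_pow n
  have hfb : ∀ n k, ‖f n (z k)‖ ≤ ‖1 - a n‖ * C := by
    intro n k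
    rw [hfP, norm_mul, hzkn, one_mul, norm_mul]
    exact mul_le_mul_of_nonneg_left (hPC k n) (norm_nonneg _)
  -- summability of ‖1 - a n‖ ^ 2
  have hsq : Summable (fun n => ‖1 - a n‖ ^ 2) := by
    obtain ⟨M, hM⟩ : ∃ M : ℝ, ∀ n : ℕ, ((n : ℝ) + 1) * ‖1 - a n‖ ≤ M := by
      have h1 : Tendsto (fun n : ℕ => ‖(n : ℂ) * (1 - a n)‖ + ‖1 - a n‖) atTop
          (nhds (‖(p : ℂ)‖ + ‖(1 : ℂ) - 1‖)) :=
        hlim.norm.add (Filter.Tendsto.const_sub (1:ℂ) halim).norm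
      obtain ⟨M, hM⟩ := h1.bddAbove_range
      refine ⟨M, fun n => ?_⟩
      have := hM (Set.mem_range_self n)
      simp only [norm_mul, Complex.norm_natCast] at this
      nlinarith [norm_nonneg (1 - a n)]
    have hM0 : 0 ≤ M := le_trans (by positivity) (hM 0)
    have hbase : Summable (fun n : ℕ => (M / ((n : ℝ) + 1)) ^ 2) := by
      have h2 : Summable (fun n : ℕ => 1 / ((n : ℝ) + 1) ^ 2) := by
        have := (summable_nat_add_iff 1).mpr (Real.summable_one_div_nat_pow.mpr (by norm_num : 1 < 2))
        refine this.congr fun n => ?_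
        push_cast; ring
      refine ((h2.mul_left (M ^ 2)).congr fun n => ?_)
      field_simp
    refine Summable.of_nonneg_of_le (fun n => by positivity) (fun n => ?_) hbase
    have hn : (0 : ℝ) < (n : ℝ) + 1 := by positivity
    have h3 : ‖1 - a n‖ ≤ M / ((n : ℝ) + 1) := by
      rw [le_div_iff₀ hn, mul_comm]; exact hM n
    exact pow_le_pow_left₀ (norm_nonneg _) h3 2
  -- generic summability
  have summable_aux : ∀ (u v : ℕ → ℂ) (Cu Cv : ℝ), 0 ≤ Cu → 0 ≤ Cv →
      (∀ n, ‖u n‖ ≤ ‖1 - a n‖ * Cu) → (∀ n, ‖v n‖ ≤ ‖1 - a n‖ * Cv) →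
      Summable (fun n => u n * (starRingEnd ℂ) (v n)) := by
    intro u v Cu Cv hCu hCv hu hv
    apply Summable.of_norm
    refine Summable.of_nonneg_of_le (fun n => norm_nonneg _) (fun n => ?_) (hsq.mul_left (Cu * Cv))
    rw [norm_mul, RCLike.norm_conj]
    calc ‖u n‖ * ‖v n‖ ≤ (‖1 - a n‖ * Cu) * (‖1 - a n‖ * Cv) :=
          mul_le_mul (hu n) (hv n) (norm_nonneg _) (by positivity)
      _ = Cu * Cv * ‖1 - a n‖ ^ 2 := by ring
  -- invertibility via determinant
  rw [Matrix.isUnit_iff_isUnit_det, isUnit_iff_ne_zero]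
  intro hdet
  obtain ⟨c, hc0, hAc⟩ := Matrix.exists_mulVec_eq_zero_iff.mpr hdet
  set g : ℕ → ℂ := fun n => ∑ k, c k * f n (z k) with hgdef
  set Cg : ℝ := (∑ k, ‖c k‖) * C with hCgdef
  have hCg0 : 0 ≤ Cg := mul_nonneg (Finset.sum_nonneg fun k _ => norm_nonneg _) hC0
  have hgb : ∀ n, ‖g n‖ ≤ ‖1 - a n‖ * Cg := by
    intro n
    calc ‖g n‖ ≤ ∑ k, ‖c k * f n (z k)‖ := norm_sum_le _ _
      _ ≤ ∑ k, ‖c k‖ * (‖1 - a n‖ * C) := by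
          refine Finset.sum_le_sum fun k _ => ?_
          rw [norm_mul]
          exact mul_le_mul_of_nonneg_left (hfb n k) (norm_nonneg _)
      _ = ‖1 - a n‖ * Cg := by rw [← Finset.sum_mul, hCgdef]; ring
  have hfbC : ∀ (j : Fin J) (n : ℕ), ‖f n (z j)‖ ≤ ‖1 - a n‖ * C := fun j n => hfb n j
  -- step 1 : mulVec entries
  have hstep1 : ∀ j, (0 : ℂ) = ∑' n, g n * (starRingEnd ℂ) (f n (z j)) := by
    intro j
    have h0 : A.mulVec c j = 0 := congrFun hAc j
    rw [Matrix.mulVec, dotProduct] at h0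
    calc (0 : ℂ) = ∑ k, A j k * c k := h0.symm
      _ = ∑ k, ∑' n, (c k * f n (z k)) * (starRingEnd ℂ) (f n (z j)) := by
          refine Finset.sum_congr rfl fun k _ => ?_
          rw [hA, ← tsum_mul_right]
          exact tsum_congr fun n => by ring
      _ = ∑' n, ∑ k, (c k * f n (z k)) * (starRingEnd ℂ) (f n (z j)) := by
          refine (Summable.tsum_finsetSum fun k _ => ?_).symm
          refine summable_aux _ _ ((‖c k‖) * C) C (by positivity) hC0 (fun n => ?_) (hfbC j)
          rw [norm_mul]
          calc ‖c k‖ * ‖f n (z k)‖ ≤ ‖c k‖ * (‖1 - a n‖ * C) :=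
                mul_le_mul_of_nonneg_left (hfb n k) (norm_nonneg _)
            _ = ‖1 - a n‖ * (‖c k‖ * C) := by ring
      _ = ∑' n, g n * (starRingEnd ℂ) (f n (z j)) := by
          exact tsum_congr fun n => by rw [hgdef, ← Finset.sum_mul]
  -- step 2 : quadratic form
  have hstep2 : (0 : ℂ) = ∑' n, g n * (starRingEnd ℂ) (g n) := by
    calc (0 : ℂ) = ∑ j, (starRingEnd ℂ) (c j) * 0 := by simp
      _ = ∑ j, ∑' n, g n * (starRingEnd ℂ) (c j * f n (z j)) := by
          refine Finset.sum_congr rfl fun j _ => ?_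
          rw [hstep1 j, ← tsum_mul_left]
          exact tsum_congr fun n => by rw [map_mul]; ring
      _ = ∑' n, ∑ j, g n * (starRingEnd ℂ) (c j * f n (z j)) := by
          refine (Summable.tsum_finsetSum fun j _ => ?_).symm
          refine summable_aux _ _ Cg ((‖c j‖) * C) hCg0 (by positivity) hgb (fun n => ?_)
          rw [norm_mul]
          calc ‖c j‖ * ‖f n (z j)‖ ≤ ‖c j‖ * (‖1 - a n‖ * C) :=
                mul_le_mul_of_nonneg_left (hfb n j) (norm_nonneg _)
            _ = ‖1 - a n‖ * (‖c j‖ * C) := by ring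
      _ = ∑' n, g n * (starRingEnd ℂ) (g n) := by
          refine tsum_congr fun n => ?_
          rw [← Finset.mul_sum, hgdef, map_sum]
  -- g vanishes
  have hgsum : Summable (fun n => ‖g n‖ ^ 2) := by
    refine Summable.of_nonneg_of_le (fun n => by positivity) (fun n => ?_) (hsq.mul_left (Cg * Cg))
    calc ‖g n‖ ^ 2 ≤ (‖1 - a n‖ * Cg) ^ 2 := pow_le_pow_left₀ (norm_nonneg _) (hgb n) 2
      _ = Cg * Cg * ‖1 - a n‖ ^ 2 := by ring
  have hgzero : ∀ n, g n = 0 := by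
    have hreal : ∑' n, ‖g n‖ ^ 2 = 0 := by
      have h1 : (0 : ℂ) = ((∑' n, ‖g n‖ ^ 2 : ℝ) : ℂ) := by
        rw [Complex.ofReal_tsum, hstep2]
        exact tsum_congr fun n => by rw [Complex.mul_conj']; push_cast; ring
      exact_mod_cast h1.symm
    intro n
    by_contra hne
    have hpos : 0 < ∑' n, ‖g n‖ ^ 2 :=
      Summable.tsum_pos hgsum (fun i => by positivity) n (pow_pos (norm_pos_iff.mpr hne) 2)
    linarith
  -- key relation
  have hg2 : ∀ n, ∑ k, c k * (z k ^ n * P k n) = 0 := by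
    intro n
    have h1 : (1 - a n) * ∑ k, c k * (z k ^ n * P k n) = 0 := by
      rw [Finset.mul_sum, ← hgzero n, hgdef]
      refine Finset.sum_congr rfl fun k _ => ?_
      rw [hfP]; ring
    have h2 : (1 : ℂ) - a n ≠ 0 := sub_ne_zero.mpr (Ne.symm (ha n))
    exact (mul_eq_zero.mp h1).resolve_left h2
  -- Cesàro argument
  have hcm : ∀ m, c m = 0 := by
    intro m
    set ω : Fin J → ℂ := fun k => z k * w m with hωdef
    have hωm : ω m = 1 := by show z m * w m = 1; rw [mul_comm]; exact hw1 m
    have hωnorm : ∀ k, ‖ω k‖ = 1 := by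
      intro k
      show ‖z k * w m‖ = 1
      rw [norm_mul, hz, hwdef, RCLike.norm_conj, hz, one_mul]
    have hωne : ∀ k, k ≠ m → ω k ≠ 1 := by
      intro k hk h1
      refine hk (hzeq m k ?_).symm
      rw [← h1]; show w m * z k = z k * w m; ring
    have hT : ∀ k, Tendsto (fun N : ℕ => (N : ℝ)⁻¹ • ∑ n ∈ Finset.range N, (ω k) ^ n * P k n)
        atTop (nhds (if k = m then D m else 0)) := by
      intro k
      by_cases hk : k = m
      · subst hk
        simp only [if_pos rfl, hωm, one_pow, one_mul]
        exact (hPlim k).cesaro_smul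
      · rw [if_neg hk]
        have hωk := hωne k hk
        have hsplit : ∀ N : ℕ, (N : ℝ)⁻¹ • ∑ n ∈ Finset.range N, (ω k) ^ n * P k n =
            (N : ℝ)⁻¹ • ((∑ n ∈ Finset.range N, (ω k) ^ n) * D k) +
            (N : ℝ)⁻¹ • (∑ n ∈ Finset.range N, (ω k) ^ n * (P k n - D k)) := by
          intro N
          rw [← smul_add, Finset.sum_mul, ← Finset.sum_add_distrib]
          congr 1
          exact Finset.sum_congr rfl fun n _ => by ring
        have h1 : Tendsto (fun N : ℕ => (N : ℝ)⁻¹ • ((∑ n ∈ Finset.range N, (ω k) ^ n) * D k))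
            atTop (nhds 0) := by
          apply squeeze_zero_norm (a := fun N : ℕ => (2 / ‖ω k - 1‖ * ‖D k‖) / N)
          · intro N
            rw [norm_smul, norm_mul]
            have hgeom : ‖∑ n ∈ Finset.range N, (ω k) ^ n‖ ≤ 2 / ‖ω k - 1‖ := by
              have hden : (0:ℝ) < ‖ω k - 1‖ := by
                rw [norm_pos_iff]; exact sub_ne_zero.mpr hωk
              rw [geom_sum_eq hωk, norm_div]
              gcongr
              calc ‖ω k ^ N - 1‖ ≤ ‖ω k ^ N‖ + ‖(1:ℂ)‖ := norm_sub_le _ _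
                _ = 2 := by rw [norm_pow, hωnorm]; norm_num
            calc ‖(N : ℝ)⁻¹‖ * (‖∑ n ∈ Finset.range N, (ω k) ^ n‖ * ‖D k‖)
                ≤ (N : ℝ)⁻¹ * ((2 / ‖ω k - 1‖) * ‖D k‖) := by
                  rw [Real.norm_eq_abs, abs_of_nonneg (by positivity)]
                  exact mul_le_mul_of_nonneg_left
                    (mul_le_mul_of_nonneg_right hgeom (norm_nonneg _)) (by positivity)
              _ = (2 / ‖ω k - 1‖ * ‖D k‖) / N := by ring
          · exact tendsto_const_div_atTop_nhds_zero_nat _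
        have h2 : Tendsto (fun N : ℕ => (N : ℝ)⁻¹ •
            (∑ n ∈ Finset.range N, (ω k) ^ n * (P k n - D k))) atTop (nhds 0) := by
          apply squeeze_zero_norm
            (a := fun N : ℕ => (N : ℝ)⁻¹ * ∑ n ∈ Finset.range N, ‖P k n - D k‖)
          · intro N
            rw [norm_smul, Real.norm_eq_abs, abs_of_nonneg (by positivity)]
            refine mul_le_mul_of_nonneg_left ?_ (by positivity)
            calc ‖∑ n ∈ Finset.range N, (ω k) ^ n * (P k n - D k)‖
                ≤ ∑ n ∈ Finset.range N, ‖(ω k) ^ n * (P k n - D k)‖ := norm_sum_le _ _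
              _ = ∑ n ∈ Finset.range N, ‖P k n - D k‖ := by
                  refine Finset.sum_congr rfl fun n _ => ?_
                  rw [norm_mul, norm_pow, hωnorm, one_pow, one_mul]
          · have h3 : Tendsto (fun n => ‖P k n - D k‖) atTop (nhds 0) := by
              have := ((hPlim k).sub_const (D k)).norm
              simpa using this
            exact h3.cesaro
        have := h1.add h2
        rw [add_zero] at this
        exact this.congr fun N => (hsplit N).symm
    -- the Cesàro averages of the full sum vanish
    have hS0 : ∀ N : ℕ, ∑ k, c k * ((N : ℝ)⁻¹ • ∑ n ∈ Finset.range N, (ω k) ^ n * P k n) = 0 := by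
      intro N
      have hinner : ∀ n, ∑ k, c k * ((ω k) ^ n * P k n) = 0 := by
        intro n
        have : ∑ k, c k * ((ω k) ^ n * P k n) = (w m) ^ n * ∑ k, c k * (z k ^ n * P k n) := by
          rw [Finset.mul_sum]
          refine Finset.sum_congr rfl fun k _ => ?_
          rw [hωdef, mul_pow]; ring
        rw [this, hg2 n, mul_zero]
      calc ∑ k, c k * ((N : ℝ)⁻¹ • ∑ n ∈ Finset.range N, (ω k) ^ n * P k n)
          = (N : ℝ)⁻¹ • ∑ k, c k * ∑ n ∈ Finset.range N, (ω k) ^ n * P k n := by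
            rw [Finset.smul_sum]
            exact Finset.sum_congr rfl fun k _ => mul_smul_comm _ _ _
        _ = (N : ℝ)⁻¹ • ∑ n ∈ Finset.range N, ∑ k, c k * ((ω k) ^ n * P k n) := by
            congr 1
            rw [Finset.sum_comm]
            exact Finset.sum_congr rfl fun k _ => Finset.mul_sum _ _ _
        _ = 0 := by
            rw [Finset.sum_congr rfl fun n _ => hinner n]
            simp
    have hlim2 : Tendsto (fun N : ℕ => ∑ k, c k *
        ((N : ℝ)⁻¹ • ∑ n ∈ Finset.range N, (ω k) ^ n * P k n)) atTop
        (nhds (∑ k, c k * (if k = m then D m else 0))) :=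
      tendsto_finset_sum _ fun k _ => (hT k).const_mul (c k)
    have hlim3 : Tendsto (fun N : ℕ => ∑ k, c k *
        ((N : ℝ)⁻¹ • ∑ n ∈ Finset.range N, (ω k) ^ n * P k n)) atTop (nhds 0) := by
      refine tendsto_const_nhds.congr fun N => (hS0 N).symm
    have heq : ∑ k, c k * (if k = m then D m else 0) = 0 := tendsto_nhds_unique hlim2 hlim3
    have : c m * D m = 0 := by
      rw [← heq]
      rw [Finset.sum_eq_single m]
      · rw [if_pos rfl]
      · intro k _ hk; rw [if_neg hk, mul_zero]
      · intro h; exact absurd (Finset.mem_univ m) h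
    exact (mul_eq_zero.mp this).resolve_right (hD m)
  exact hc0 (funext hcm)
end

section
/- For j = 1, …, J set μ_j = ∏_{k≠j} (w_j − w_k), and for each integer n ≥ 0 define Q_n(x) = Σ_{j=1}^J (w_j^J/μ_j)·φ(x/w_j)·w_j^n. Then for every integer n ≥ 0 and every x ∈ ℂ, Σ_{i=0}^n β_i·Q_{n−i}(x) = β_{n+1}·(x^{n+1} − 1), where β_i = 0 for i > J (so the right-hand side is 0 whenever n ≥ J). -/
open Polynomial Finset

/-- With `μ j = ∏_{k ≠ j} (w j - w k)` and
`Q n x = ∑ j, (w j ^ J / μ j) * φ (x / w j) * w j ^ n`, the functions `Q n` satisfy the recursion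
`∑_{i=0}^n β i * Q (n - i) x = β (n+1) * (x^(n+1) - 1)` for all `n ≥ 0` and `x ∈ ℂ`. -/
theorem statement10
    (J : ℕ) (hJ : 1 ≤ J)
    (z : Fin J → ℂ) (hz : ∀ j, ‖z j‖ = 1) (hzinj : Function.Injective z)
    (w : Fin J → ℂ) (hw : ∀ j, w j = (starRingEnd ℂ) (z j))
    (φ : ℂ → ℂ) (hφ : ∀ x, φ x = ∏ j, (1 - w j * x))
    (β : ℕ → ℂ) (hβ : ∀ x, φ x = ∑ k ∈ Finset.range (J + 1), β k * x ^ k)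
    (hβ0 : β 0 = 1) (hβJ : ∀ k, J < k → β k = 0)
    (μ : Fin J → ℂ) (hμ : ∀ j, μ j = ∏ k ∈ Finset.univ.erase j, (w j - w k))
    (Q : ℕ → ℂ → ℂ)
    (hQ : ∀ n x, Q n x = ∑ j, (w j ^ J / μ j) * φ (x / w j) * w j ^ n) :
    ∀ (n : ℕ) (x : ℂ),
      ∑ i ∈ Finset.range (n + 1), β i * Q (n - i) x = β (n + 1) * (x ^ (n + 1) - 1) := by
  -- basic facts about z and w
  have hznsq : ∀ j, Complex.normSq (z j) = 1 := by
    intro j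
    have h := hz j
    have : ‖z j‖ = 1 := h
    rw [Complex.normSq_eq_norm_sq, this, one_pow]
  have hz0 : ∀ j, z j ≠ 0 := by
    intro j hj
    have := hznsq j
    simp [hj] at this
  have hwz : ∀ j, w j * z j = 1 := by
    intro j
    rw [hw, mul_comm, Complex.mul_conj, hznsq]
    norm_num
  have hw0 : ∀ j, w j ≠ 0 := by
    intro j h
    have := hwz j
    rw [h, zero_mul] at this
    exact one_ne_zero this.symm
  have hwinj : Function.Injective w := by
    intro a b hab
    apply hzinj
    rw [hw, hw] at hab
    exact (starRingEnd ℂ).injective hab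
  have hμ0 : ∀ j, μ j ≠ 0 := by
    intro j
    rw [hμ]
    apply Finset.prod_ne_zero_iff.mpr
    intro k hk
    rw [sub_ne_zero]
    intro h
    exact (Finset.mem_erase.mp hk).1 (hwinj h).symm
  have hφz : ∀ l, φ (z l) = 0 := by
    intro l
    rw [hφ]
    apply Finset.prod_eq_zero (Finset.mem_univ l)
    rw [hwz l, sub_self]
  -- the polynomial Φ and its coefficients
  set Φ : Polynomial ℂ := ∏ j, (1 - C (w j) * X) with hΦdef
  have hΦeval : ∀ y, Φ.eval y = φ y := by
    intro y
    rw [hφ, hΦdef, eval_prod]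
    simp
  have hΦsum : Φ = ∑ k ∈ Finset.range (J + 1), C (β k) * X ^ k := by
    apply Polynomial.funext
    intro y
    rw [hΦeval, hβ, eval_finset_sum]
    simp
  have hΦcoeff : ∀ m, Φ.coeff m = β m := by
    intro m
    rw [hΦsum, finset_sum_coeff]
    have h1 : ∀ b ∈ Finset.range (J + 1),
        (C (β b) * X ^ b).coeff m = if b = m then β m else 0 := by
      intro b _
      rw [coeff_C_mul, coeff_X_pow]
      by_cases h : m = b
      · simp [h]
      · simp [h, Ne.symm h]
    rw [Finset.sum_congr rfl h1, Finset.sum_ite_eq' (Finset.range (J + 1)) m]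
    by_cases hm : m ∈ Finset.range (J + 1)
    · simp [hm]
    · simp only [hm, if_false]
      rw [hβJ m (by simp at hm; omega)]
  -- the polynomials Γ j
  set Γ : Fin J → Polynomial ℂ := fun j => ∏ k ∈ Finset.univ.erase j, (1 - C (w k) * X)
    with hΓdef
  have hfactor : ∀ j, Φ = (1 - C (w j) * X) * Γ j := by
    intro j
    rw [hΦdef, hΓdef]
    exact (Finset.mul_prod_erase Finset.univ _ (Finset.mem_univ j)).symm
  have hγcoeff : ∀ (j : Fin J) (m : ℕ),
      β (m + 1) = (Γ j).coeff (m + 1) - w j * (Γ j).coeff m := by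
    intro j m
    rw [← hΦcoeff, hfactor j]
    have h2 : (1 - C (w j) * X) * Γ j = Γ j - C (w j) * (X * Γ j) := by ring
    rw [h2, coeff_sub, coeff_C_mul, coeff_X_mul]
  have hγ0 : ∀ j, (Γ j).coeff 0 = 1 := by
    intro j
    rw [Polynomial.coeff_zero_eq_eval_zero, hΓdef]
    simp [eval_prod]
  -- Lemma A
  have lemA : ∀ (j : Fin J) (n : ℕ),
      (∑ i ∈ Finset.range (n + 1), β i * w j ^ (n - i)) = (Γ j).coeff n := by
    intro j n
    induction n with
    | zero => simp [hβ0, hγ0]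
    | succ n ih =>
      rw [Finset.sum_range_succ]
      have hstep : ∑ i ∈ Finset.range (n + 1), β i * w j ^ (n + 1 - i)
          = w j * ∑ i ∈ Finset.range (n + 1), β i * w j ^ (n - i) := by
        rw [Finset.mul_sum]
        apply Finset.sum_congr rfl
        intro i hi
        simp only [Finset.mem_range] at hi
        have h3 : n + 1 - i = (n - i) + 1 := by omega
        rw [h3, pow_succ]
        ring
      rw [hstep, ih, Nat.sub_self, pow_zero, mul_one, hγcoeff j n]
      ring
  intro n x
  -- coefficients c j
  set c : Fin J → ℂ := fun j => (w j ^ J / μ j) * φ (x / w j) with hc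
  set P : Polynomial ℂ := ∑ j, C (c j) * Γ j with hP
  set Rp : Polynomial ℂ := ∑ m ∈ Finset.range J, C (β (m + 1) * (x ^ (m + 1) - 1)) * X ^ m
    with hRp
  -- degree bounds
  have hlin : ∀ a : ℂ, (1 - C a * X).natDegree ≤ 1 := by
    intro a
    apply le_trans (natDegree_sub_le _ _)
    simp only [natDegree_one, max_le_iff]
    exact ⟨by omega, le_trans (natDegree_C_mul_le _ _) (by simp)⟩
  have hΓdeg : ∀ j, (Γ j).natDegree ≤ J - 1 := by
    intro j
    rw [hΓdef]
    apply le_trans (natDegree_prod_le _ _)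
    apply le_trans (Finset.sum_le_sum (fun k _ => hlin (w k)))
    simp [Finset.card_erase_of_mem]
  have hPdeg : P.natDegree ≤ J - 1 := by
    apply natDegree_sum_le_of_forall_le
    intro j _
    exact le_trans (natDegree_C_mul_le _ _) (hΓdeg j)
  have hRdeg : Rp.natDegree ≤ J - 1 := by
    apply natDegree_sum_le_of_forall_le
    intro m hm
    apply le_trans (natDegree_C_mul_le _ _)
    simp only [natDegree_X_pow]
    simp only [Finset.mem_range] at hm
    omega
  -- evaluation facts
  have hzinvw : ∀ l, x / w l = x * z l := by
    intro l
    rw [div_eq_mul_inv, inv_eq_of_mul_eq_one_right (hwz l)]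
  have hPeval : ∀ l, P.eval (z l) = w l * φ (x * z l) := by
    intro l
    rw [hP, eval_finset_sum]
    rw [Finset.sum_eq_single l]
    · simp only [eval_mul, eval_C, hΓdef]
      rw [eval_prod]
      have hprod : ∏ k ∈ Finset.univ.erase l, ((1 - C (w k) * X).eval (z l))
          = μ l * z l ^ (J - 1) := by
        have h4 : ∀ k ∈ Finset.univ.erase l, (1 - C (w k) * X).eval (z l)
            = (w l - w k) * z l := by
          intro k _
          simp only [eval_sub, eval_one, eval_mul, eval_C, eval_X]
          have := hwz l
          ring_nf
          linear_combination -this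
        rw [Finset.prod_congr rfl h4, Finset.prod_mul_distrib, Finset.prod_const,
          Finset.card_erase_of_mem (Finset.mem_univ l), Finset.card_univ, Fintype.card_fin, hμ]
      rw [hprod, hc]
      simp only
      rw [hzinvw l]
      have hpow : w l ^ J * z l ^ (J - 1) = w l := by
        have hJ1 : J = (J - 1) + 1 := by omega
        calc w l ^ J * z l ^ (J - 1) = w l * ((w l * z l) ^ (J - 1)) := by
              rw [mul_pow]
              nth_rewrite 1 [hJ1]
              rw [pow_succ]
              ring
          _ = w l := by rw [hwz, one_pow, mul_one]
      have h9 : w l ^ J / μ l * φ (x * z l) * (μ l * z l ^ (J - 1))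
          = w l ^ J * z l ^ (J - 1) * φ (x * z l) * (μ l * (μ l)⁻¹) := by
        ring
      rw [h9, mul_inv_cancel₀ (hμ0 l), mul_one]
      linear_combination φ (x * z l) * hpow
    · intro b _ hb
      simp only [eval_mul, eval_C, hΓdef]
      rw [eval_prod]
      have h5 : ∏ k ∈ Finset.univ.erase b, ((1 - C (w k) * X).eval (z l)) = 0 := by
        apply Finset.prod_eq_zero (Finset.mem_erase.mpr ⟨hb.symm, Finset.mem_univ l⟩)
        simp only [eval_sub, eval_one, eval_mul, eval_C, eval_X]
        rw [hwz l, sub_self]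
      rw [h5, mul_zero]
    · intro h
      exact absurd (Finset.mem_univ l) h
  have hsumφ : ∀ y : ℂ, ∑ m ∈ Finset.range J, β (m + 1) * y ^ (m + 1) = φ y - 1 := by
    intro y
    rw [hβ y, Finset.sum_range_succ' (fun k => β k * y ^ k) J]
    simp [hβ0]
  have hReval : ∀ l, Rp.eval (z l) = w l * φ (x * z l) := by
    intro l
    apply mul_left_cancel₀ (hz0 l)
    rw [hRp, eval_finset_sum]
    have h6 : z l * ∑ m ∈ Finset.range J, (C (β (m + 1) * (x ^ (m + 1) - 1)) * X ^ m).eval (z l)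
        = ∑ m ∈ Finset.range J, β (m + 1) * ((x * z l) ^ (m + 1) - z l ^ (m + 1)) := by
      rw [Finset.mul_sum]
      apply Finset.sum_congr rfl
      intro m _
      simp only [eval_mul, eval_C, eval_pow, eval_X]
      rw [mul_pow, pow_succ]
      ring
    rw [h6]
    have h7 : ∑ m ∈ Finset.range J, β (m + 1) * ((x * z l) ^ (m + 1) - z l ^ (m + 1))
        = (φ (x * z l) - 1) - (φ (z l) - 1) := by
      rw [← hsumφ (x * z l), ← hsumφ (z l), ← Finset.sum_sub_distrib]
      apply Finset.sum_congr rfl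
      intro m _
      ring
    rw [h7, hφz l]
    have := hwz l
    ring_nf
    linear_combination (-(φ (x * z l))) * this
  -- the two polynomials agree
  have hPR : P = Rp := by
    have h0 : P - Rp = 0 := by
      apply Polynomial.eq_zero_of_natDegree_lt_card_of_eval_eq_zero _ hzinj
      · intro l
        rw [eval_sub, hPeval l, hReval l, sub_self]
      · rw [Fintype.card_fin]
        apply lt_of_le_of_lt (natDegree_sub_le _ _)
        rw [max_lt_iff]
        constructor <;> omega
    exact sub_eq_zero.mp h0
  -- final computation
  calc ∑ i ∈ Finset.range (n + 1), β i * Q (n - i) x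
      = ∑ i ∈ Finset.range (n + 1), β i * ∑ j, c j * w j ^ (n - i) := by
        apply Finset.sum_congr rfl
        intro i _
        rw [hQ]
    _ = ∑ j, c j * ∑ i ∈ Finset.range (n + 1), β i * w j ^ (n - i) := by
        simp_rw [Finset.mul_sum]
        rw [Finset.sum_comm]
        apply Finset.sum_congr rfl
        intro j _
        apply Finset.sum_congr rfl
        intro i _
        ring
    _ = ∑ j, c j * (Γ j).coeff n := by
        apply Finset.sum_congr rfl
        intro j _
        rw [lemA j n]
    _ = P.coeff n := by
        rw [hP, finset_sum_coeff]
        apply Finset.sum_congr rfl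
        intro j _
        rw [coeff_C_mul]
    _ = Rp.coeff n := by rw [hPR]
    _ = β (n + 1) * (x ^ (n + 1) - 1) := by
        rw [hRp, finset_sum_coeff]
        have h8 : ∀ m ∈ Finset.range J,
            (C (β (m + 1) * (x ^ (m + 1) - 1)) * X ^ m).coeff n
            = if m = n then β (n + 1) * (x ^ (n + 1) - 1) else 0 := by
          intro m _
          rw [coeff_C_mul, coeff_X_pow]
          by_cases h : n = m
          · simp [h]
          · simp [h, Ne.symm h]
        rw [Finset.sum_congr rfl h8, Finset.sum_ite_eq' (Finset.range J) n]
        by_cases hn : n ∈ Finset.range J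
        · simp [hn]
        · simp only [hn, if_false]
          rw [hβJ (n + 1) (by simp at hn; omega)]
          rw [zero_mul]
end

section
/- There exists an integer n ≥ 0 such that the J×J matrix B_n whose (i,j) entry is f_{n+i−1}(z_j) (for 1 ≤ i, j ≤ J) is invertible. -/
open Matrix Filter Finset

/-- There exists `n` such that the `J × J` matrix with `(i,j)` entry
`f (n + i) (z j)` is invertible. -/
theorem statement13
    (J : ℕ) (hJ : 1 ≤ J)
    (z : Fin J → ℂ) (hz : ∀ j, ‖z j‖ = 1) (hzinj : Function.Injective z)
    (φ : ℂ → ℂ) (hφ : ∀ x, φ x = ∏ j, (1 - (starRingEnd ℂ) (z j) * x))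
    (a : ℕ → ℂ) (ha : ∀ n, a n ≠ 1) (halim : Filter.Tendsto a Filter.atTop (nhds 1))
    (f : ℕ → ℂ → ℂ) (hf : ∀ n x, f n x = x ^ n * φ (a n * x)) :
    ∃ n : ℕ, IsUnit (Matrix.of fun i j : Fin J => f (n + (i : ℕ)) (z j)) := by
  -- auxiliary: conj (z j) * z j = 1
  have hzz : ∀ j, (starRingEnd ℂ) (z j) * z j = 1 := by
    intro j
    have h1 : Complex.normSq (z j) = 1 := by
      rw [Complex.normSq_eq_norm_sq, hz]; norm_num
    rw [mul_comm, Complex.mul_conj, h1, Complex.ofReal_one]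
  -- the truncated product
  set g : ℂ → Fin J → ℂ :=
    fun c j => ∏ k ∈ Finset.univ.erase j, (1 - (starRingEnd ℂ) (z k) * (c * z j)) with hg
  have hφdec : ∀ (c : ℂ) (j : Fin J), φ (c * z j) = (1 - c) * g c j := by
    intro c j
    rw [hφ, ← Finset.mul_prod_erase Finset.univ _ (Finset.mem_univ j)]
    congr 1
    rw [show (starRingEnd ℂ) (z j) * (c * z j) = c * ((starRingEnd ℂ) (z j) * z j) from by ring,
      hzz, mul_one]
  -- the rescaled matrices and their limit
  set D : ℕ → Matrix (Fin J) (Fin J) ℂ :=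
    fun n => Matrix.of fun i j : Fin J => z j ^ (i : ℕ) * g (a (n + i)) j with hD
  set L : Matrix (Fin J) (Fin J) ℂ :=
    Matrix.of fun i j : Fin J => z j ^ (i : ℕ) * g 1 j with hL
  have hB : ∀ n : ℕ, (Matrix.of fun i j : Fin J => f (n + (i : ℕ)) (z j)) =
      Matrix.diagonal (fun i : Fin J => 1 - a (n + i)) *
        (D n * Matrix.diagonal (fun j : Fin J => z j ^ n)) := by
    intro n
    ext i j
    rw [Matrix.diagonal_mul, Matrix.mul_diagonal]
    simp only [Matrix.of_apply, hD, hf, hφdec, pow_add]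
    ring
  -- nonvanishing of g 1 j
  have hg1 : ∀ j, g 1 j ≠ 0 := by
    intro j
    apply Finset.prod_ne_zero_iff.mpr
    intro k hk
    intro h0
    have hkj : k ≠ j := (Finset.mem_erase.mp hk).1
    have h1 : (starRingEnd ℂ) (z k) * z j = 1 := by
      have := sub_eq_zero.mp h0
      rw [one_mul] at this; exact this.symm
    have : z j = z k := by
      calc z j = (z k * (starRingEnd ℂ) (z k)) * z j := by
            rw [mul_comm (z k), hzz, one_mul]
        _ = z k * ((starRingEnd ℂ) (z k) * z j) := by ring
        _ = z k := by rw [h1, mul_one]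
    exact hkj (hzinj this.symm)
  -- det L ≠ 0
  have hLdet : L.det ≠ 0 := by
    have hLf : L = (Matrix.vandermonde z)ᵀ * Matrix.diagonal (fun j => g 1 j) := by
      ext i j
      rw [Matrix.mul_diagonal]
      simp [hL, Matrix.vandermonde]
    rw [hLf, Matrix.det_mul, Matrix.det_transpose, Matrix.det_vandermonde, Matrix.det_diagonal]
    apply mul_ne_zero
    · apply Finset.prod_ne_zero_iff.mpr
      intro i _
      apply Finset.prod_ne_zero_iff.mpr
      intro k hk
      have : i ≠ k := ne_of_lt (Finset.mem_Ioi.mp hk)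
      exact sub_ne_zero.mpr fun h => this (hzinj h.symm)
    · exact Finset.prod_ne_zero_iff.mpr fun j _ => hg1 j
  -- continuity of g in its first argument
  have hgc : ∀ j, Continuous fun c => g c j := by
    intro j
    apply continuous_finset_prod
    intro k _
    fun_prop
  -- D n → L
  have hconv : Tendsto (fun n => D n) atTop (nhds L) := by
    refine tendsto_pi_nhds.mpr ?_
    intro i
    rw [tendsto_pi_nhds]
    intro j
    simp only [hD, hL, Matrix.of_apply]
    have h1 : Tendsto (fun n : ℕ => a (n + (i : ℕ))) atTop (nhds 1) :=
      halim.comp (tendsto_add_atTop_nat (i : ℕ))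
    exact Filter.Tendsto.const_mul _ (((hgc j).tendsto 1).comp h1)
  have hdetconv : Tendsto (fun n => (D n).det) atTop (nhds L.det) :=
    ((Continuous.matrix_det continuous_id).tendsto L).comp hconv
  obtain ⟨n, hn⟩ := (hdetconv.eventually_ne hLdet).exists
  refine ⟨n, ?_⟩
  rw [Matrix.isUnit_iff_isUnit_det, isUnit_iff_ne_zero, hB n, Matrix.det_mul, Matrix.det_mul,
    Matrix.det_diagonal, Matrix.det_diagonal]
  refine mul_ne_zero ?_ (mul_ne_zero hn ?_)
  · exact Finset.prod_ne_zero_iff.mpr fun i _ => sub_ne_zero.mpr fun h => ha _ h.symm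
  · refine Finset.prod_ne_zero_iff.mpr fun j _ => pow_ne_zero _ ?_
    intro h
    have := hz j
    rw [h] at this
    simp at this
end
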